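/- arXiv:2509.05235 — 8 statements merged into one kernel-verified Lean document; each statement's English description precedes it below -/
import Mathlib

section
/- For every n ≥ 1, the number of monomials with nonzero coefficient of the polynomial ψ_n is at most PFS(n) = Σ_{ν=1}^{n} p(ν), where p(ν) is the number of partitions of ν. -/
open scoped BigOperators

/-- Partial Bell polynomial `B_{n,k}`; the variable `X i` represents `x_{i+1}`. -/
noncomputable def bellPartial (n k : ℕ) : MvPolynomial ℕ ℤ :=
  ∑ j : Fin (n - k + 1) → Fin (n + 1),
    if (∑ ν : Fin (n - k + 1), ((ν : ℕ) + 1) * (j ν : ℕ)) = n ∧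
        (∑ ν : Fin (n - k + 1), (j ν : ℕ)) = k then
      (MvPolynomial.C ((n.factorial /
          ∏ ν : Fin (n - k + 1),
            ((j ν : ℕ).factorial * ((ν : ℕ) + 1).factorial ^ (j ν : ℕ)) : ℕ) : ℤ)) *
        ∏ ν : Fin (n - k + 1), MvPolynomial.X (ν : ℕ) ^ (j ν : ℕ)
    else 0

/-- Complete Bell polynomial `B_n = ∑_{k=1}^n B_{n,k}`. -/
noncomputable def bellComplete (n : ℕ) : MvPolynomial ℕ ℤ :=
  ∑ k ∈ Finset.Icc 1 n, bellPartial n k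

/-- `σ̂*_k(x_1,…,x_k) = (-1)^k B_k(-0!·x_1, -1!·x_2, …, -(k-1)!·x_k)`
(recall `X i` represents `x_{i+1}`, so `x_{i+1} ↦ -i!·x_{i+1}`). -/
noncomputable def sigmaStar (k : ℕ) : MvPolynomial ℕ ℤ :=
  (-1) ^ k * MvPolynomial.aeval
    (fun i : ℕ => MvPolynomial.C (-(i.factorial : ℤ)) * MvPolynomial.X i)
    (bellComplete k)

/-- Signed Stirling numbers of the first kind:
`x(x-1)⋯(x-n+1) = ∑_{k=0}^n s(n,k) x^k`. -/
noncomputable def stirlingFirst (n k : ℕ) : ℤ :=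
  (∏ i ∈ Finset.range n, (Polynomial.X - Polynomial.C (i : ℤ))).coeff k

/-- `Ψ_n` built from a family `f` playing the role of `ψ`:
`Ψ_n = ∑_{ν=2}^{n} ∑_{k=0}^{min(ν,n-ν)} (-1)^{ν+1} s(ν+1,k+1) (n)_k B_{n-k,ν}(f_1,…,f_{n-k-ν+1})`. -/
noncomputable def PsiOf (f : ℕ → MvPolynomial ℕ ℤ) (n : ℕ) : MvPolynomial ℕ ℤ :=
  ∑ ν ∈ Finset.Icc 2 n, ∑ k ∈ Finset.range (min ν (n - ν) + 1),
    MvPolynomial.C ((-1) ^ (ν + 1) * stirlingFirst (ν + 1) (k + 1) *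
        ((n.factorial / (n - k).factorial : ℕ) : ℤ)) *
      MvPolynomial.aeval (fun i : ℕ => f (i + 1)) (bellPartial (n - k) ν)

/-- The polynomials `ψ_n`, with `ψ_0 = 0` and `ψ_n = n·ψ_{n-1} + σ̂*_n + Ψ_n` for `n ≥ 1`. -/
noncomputable def psi : ℕ → MvPolynomial ℕ ℤ := fun n =>
  Nat.strongRecOn n fun n ih =>
    if h : n = 0 then 0
    else
      (n : ℤ) • ih (n - 1) (by omega) + sigmaStar n +
        PsiOf (fun m => if hm : m < n then ih m hm else 0) n

/-- The polynomials `Ψ_n`. -/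
noncomputable def Psi (n : ℕ) : MvPolynomial ℕ ℤ := PsiOf psi n


open MvPolynomial

namespace Stmt2Aux

/-- weighted degree -/
def W (m : ℕ →₀ ℕ) : ℕ := m.sum fun i e => (i + 1) * e
/-- total degree -/
def Cn (m : ℕ →₀ ℕ) : ℕ := m.sum fun _ e => e

lemma W_add (a b : ℕ →₀ ℕ) : W (a + b) = W a + W b :=
  Finsupp.sum_add_index' (fun i => by simp) (fun i x y => by ring)

lemma Cn_add (a b : ℕ →₀ ℕ) : Cn (a + b) = Cn a + Cn b :=
  Finsupp.sum_add_index' (fun i => rfl) (fun i x y => rfl)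

lemma W_single (a e : ℕ) : W (Finsupp.single a e) = (a + 1) * e :=
  Finsupp.sum_single_index (by simp)

lemma Cn_single (a e : ℕ) : Cn (Finsupp.single a e) = e :=
  Finsupp.sum_single_index rfl

lemma Cn_le_W (m : ℕ →₀ ℕ) : Cn m ≤ W m :=
  Finset.sum_le_sum fun i _ => Nat.le_mul_of_pos_left _ (Nat.succ_pos i)

/-- All monomials `m` in the support have `a ≤ Cn m` and `W m ≤ b`. -/
def Bdd (a b : ℕ) (P : MvPolynomial ℕ ℤ) : Prop :=
  ∀ m ∈ P.support, a ≤ Cn m ∧ W m ≤ b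

lemma Bdd.mono {a b a' b' : ℕ} {P : MvPolynomial ℕ ℤ} (h : Bdd a b P)
    (ha : a' ≤ a) (hb : b ≤ b') : Bdd a' b' P := fun m hm =>
  ⟨ha.trans (h m hm).1, (h m hm).2.trans hb⟩

lemma Bdd_zero (a b : ℕ) : Bdd a b 0 := fun m hm => by simp at hm

lemma Bdd.add {a b : ℕ} {P Q : MvPolynomial ℕ ℤ} (hP : Bdd a b P) (hQ : Bdd a b Q) :
    Bdd a b (P + Q) := by
  classical
  intro m hm
  rcases Finset.mem_union.mp (MvPolynomial.support_add hm) with h | h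
  · exact hP m h
  · exact hQ m h

lemma Bdd.sum {a b : ℕ} {ι : Type*} {s : Finset ι} {f : ι → MvPolynomial ℕ ℤ}
    (h : ∀ i ∈ s, Bdd a b (f i)) : Bdd a b (∑ i ∈ s, f i) := by
  classical
  induction s using Finset.induction with
  | empty => simpa using Bdd_zero a b
  | insert _ _ hx ih =>
    rw [Finset.sum_insert hx]
    exact (h _ (Finset.mem_insert_self _ _)).add
      (ih fun i hi => h i (Finset.mem_insert_of_mem hi))

lemma Bdd.mul {a b c d : ℕ} {P Q : MvPolynomial ℕ ℤ} (hP : Bdd a b P) (hQ : Bdd c d Q) :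
    Bdd (a + c) (b + d) (P * Q) := by
  classical
  intro m hm
  have := MvPolynomial.support_mul P Q hm
  rcases Finset.mem_add.mp this with ⟨m1, hm1, m2, hm2, rfl⟩
  obtain ⟨h1, h2⟩ := hP m1 hm1
  obtain ⟨h3, h4⟩ := hQ m2 hm2
  rw [Cn_add, W_add]
  exact ⟨Nat.add_le_add h1 h3, Nat.add_le_add h2 h4⟩

lemma Bdd_one : Bdd 0 0 (1 : MvPolynomial ℕ ℤ) := by
  classical
  intro m hm
  rw [← MvPolynomial.C_1, MvPolynomial.C_apply, MvPolynomial.support_monomial,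
    if_neg (one_ne_zero)] at hm
  rcases Finset.mem_singleton.mp hm with rfl
  simp [Cn, W]

lemma Bdd.pow {a b : ℕ} {P : MvPolynomial ℕ ℤ} (hP : Bdd a b P) (k : ℕ) :
    Bdd (k * a) (k * b) (P ^ k) := by
  induction k with
  | zero =>
    rw [pow_zero]
    exact (Bdd_one).mono (by simp) (by simp)
  | succ k ih =>
    rw [pow_succ]
    exact (ih.mul hP).mono (by ring_nf; omega) (by ring_nf; omega)

lemma Bdd.prod {ι : Type*} {s : Finset ι} {f : ι → MvPolynomial ℕ ℤ} {A B : ι → ℕ}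
    (h : ∀ i ∈ s, Bdd (A i) (B i) (f i)) :
    Bdd (∑ i ∈ s, A i) (∑ i ∈ s, B i) (∏ i ∈ s, f i) := by
  classical
  induction s using Finset.induction with
  | empty => simpa using Bdd_one
  | insert _ _ hx ih =>
    rw [Finset.prod_insert hx, Finset.sum_insert hx, Finset.sum_insert hx]
    exact (h _ (Finset.mem_insert_self _ _)).mul
      (ih fun i hi => h i (Finset.mem_insert_of_mem hi))


lemma Bdd_X (i : ℕ) : Bdd 1 (i + 1) (MvPolynomial.X i : MvPolynomial ℕ ℤ) := by
  intro m hm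
  rw [MvPolynomial.support_X] at hm
  rcases Finset.mem_singleton.mp hm with rfl
  simp [Cn_single, W_single]

lemma Bdd.intSmul {a b : ℕ} {P : MvPolynomial ℕ ℤ} (hP : Bdd a b P) (c : ℤ) :
    Bdd a b (c • P) := fun m hm => hP m (MvPolynomial.support_smul hm)

lemma Bdd.C_mul {a b : ℕ} {P : MvPolynomial ℕ ℤ} (hP : Bdd a b P) (c : ℤ) :
    Bdd a b (MvPolynomial.C c * P) := by
  rw [MvPolynomial.C_mul']
  exact hP.intSmul c

lemma bdd_bellPartial (n k : ℕ) : Bdd k n (bellPartial n k) := by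
  classical
  unfold bellPartial
  apply Bdd.sum
  intro j _
  split
  case isTrue h =>
    apply Bdd.C_mul
    have := Bdd.prod (s := (Finset.univ : Finset (Fin (n - k + 1))))
      (f := fun ν => (MvPolynomial.X (ν : ℕ) : MvPolynomial ℕ ℤ) ^ (j ν : ℕ))
      (A := fun ν => (j ν : ℕ) * 1) (B := fun ν => (j ν : ℕ) * ((ν : ℕ) + 1))
      (fun ν _ => (Bdd_X (ν : ℕ)).pow (j ν : ℕ))
    refine this.mono ?_ ?_
    · exact ((show (∑ i : Fin (n - k + 1), (j i : ℕ) * 1) = ∑ i : Fin (n - k + 1), (j i : ℕ)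
          from Finset.sum_congr rfl fun ν _ => mul_one _).trans h.2).ge
    · exact ((show (∑ i : Fin (n - k + 1), (j i : ℕ) * ((i : ℕ) + 1))
            = ∑ i : Fin (n - k + 1), ((i : ℕ) + 1) * (j i : ℕ)
          from Finset.sum_congr rfl fun ν _ => mul_comm _ _).trans h.1).le
  case isFalse => exact Bdd_zero _ _

lemma bdd_bellComplete (n : ℕ) : Bdd 1 n (bellComplete n) := by
  apply Bdd.sum
  intro k hk
  rcases Finset.mem_Icc.mp hk with ⟨h1, _⟩
  exact (bdd_bellPartial n k).mono h1 le_rfl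

lemma Bdd.aeval {f : ℕ → MvPolynomial ℕ ℤ} (hf : ∀ i, Bdd 1 (i + 1) (f i))
    {a b : ℕ} {P : MvPolynomial ℕ ℤ} (hP : Bdd a b P) :
    Bdd a b (MvPolynomial.aeval f P) := by
  rw [MvPolynomial.as_sum P, map_sum]
  apply Bdd.sum
  intro m hm
  rw [MvPolynomial.aeval_monomial, MvPolynomial.algebraMap_eq]
  apply Bdd.C_mul
  have hprod := Bdd.prod (s := m.support) (f := fun i => f i ^ m i)
    (A := fun i => m i * 1) (B := fun i => m i * (i + 1))
    (fun i _ => (hf i).pow (m i))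
  refine (hprod.mono ?_ ?_) |>.mono (hP m hm).1 (hP m hm).2
  · apply le_of_eq; exact Finset.sum_congr rfl fun i _ => (mul_one _).symm
  · apply le_of_eq; exact Finset.sum_congr rfl fun i _ => mul_comm _ _

lemma bdd_sigmaStar (n : ℕ) : Bdd 1 n (sigmaStar n) := by
  unfold sigmaStar
  rw [show ((-1 : MvPolynomial ℕ ℤ)) ^ n = MvPolynomial.C ((-1 : ℤ) ^ n) by
    rw [map_pow, map_neg, map_one]]
  apply Bdd.C_mul
  exact Bdd.aeval (fun i => (Bdd_X i).C_mul _) (bdd_bellComplete n)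

lemma bdd_PsiOf {f : ℕ → MvPolynomial ℕ ℤ} (hf : ∀ i, Bdd 1 (i + 1) (f (i + 1)))
    (n : ℕ) : Bdd 1 n (PsiOf f n) := by
  unfold PsiOf
  apply Bdd.sum; intro ν hν
  apply Bdd.sum; intro k _
  rcases Finset.mem_Icc.mp hν with ⟨h2, hn⟩
  apply Bdd.C_mul
  exact (Bdd.aeval hf ((bdd_bellPartial (n - k) ν).mono le_rfl le_rfl)).mono
    (by omega) (by omega)

lemma psi_eq (n : ℕ) :
    psi n =
      if h : n = 0 then 0
      else
        (n : ℤ) • psi (n - 1) + sigmaStar n +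
          PsiOf (fun m => if hm : m < n then psi m else 0) n :=
  Nat.strongRecOn_eq _ n

lemma bdd_psi (n : ℕ) : Bdd 1 n (psi n) := by
  induction n using Nat.strongRecOn with
  | ind n ih =>
    rw [psi_eq]
    by_cases h : n = 0
    · rw [dif_pos h]; exact Bdd_zero _ _
    · rw [dif_neg h]
      refine Bdd.add (Bdd.add ?_ ?_) ?_
      · exact ((ih (n - 1) (by omega)).mono le_rfl (by omega)).intSmul _
      · exact bdd_sigmaStar n
      · apply bdd_PsiOf
        intro i
        by_cases hm : i + 1 < n
        · rw [dif_pos hm]; exact ih (i + 1) hm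
        · rw [dif_neg hm]; exact Bdd_zero _ _

lemma sum_map_toMultiset (m : ℕ →₀ ℕ) :
    ((Finsupp.toMultiset m).map fun i => i + 1).sum = W m := by
  induction m using Finsupp.induction with
  | zero => simp [W, Finsupp.toMultiset_zero]
  | single_add a b f ha hb ih =>
    rw [Finsupp.toMultiset_add, Multiset.map_add, Multiset.sum_add, ih,
      Finsupp.toMultiset_single, W_add, W_single]
    simp [Multiset.nsmul_singleton, Multiset.sum_replicate]
    ring

/-- The partition associated to a monomial. -/
noncomputable def partOf (m : ℕ →₀ ℕ) : Nat.Partition (W m) where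
  parts := (Finsupp.toMultiset m).map fun i => i + 1
  parts_pos := by
    intro i hi
    rcases Multiset.mem_map.mp hi with ⟨j, _, rfl⟩
    omega
  parts_sum := sum_map_toMultiset m

lemma partOf_inj {m m' : ℕ →₀ ℕ} (h : W m = W m')
    (hp : (partOf m).parts = (partOf m').parts) : m = m' := by
  have h2 : Finsupp.toMultiset m = Finsupp.toMultiset m' := by
    have := Multiset.map_injective (f := fun i : ℕ => i + 1) (add_left_injective 1) hp
    exact this
  ext a
  have := congrArg (Multiset.count a) h2
  simpa using this

end Stmt2Aux

theorem stmt2 (n : ℕ) (hn : 1 ≤ n) :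
    (psi n).support.card ≤ ∑ ν ∈ Finset.Icc 1 n, Fintype.card (Nat.Partition ν) := by
  classical
  have hb := Stmt2Aux.bdd_psi n
  have hcard : ∑ ν ∈ Finset.Icc 1 n, Fintype.card (Nat.Partition ν)
      = ((Finset.Icc 1 n).sigma fun ν => (Finset.univ : Finset (Nat.Partition ν))).card := by
    rw [Finset.card_sigma]
    simp
  rw [hcard]
  apply Finset.card_le_card_of_injOn (fun m => ⟨Stmt2Aux.W m, Stmt2Aux.partOf m⟩)
  · intro m hm
    rw [Finset.mem_coe, Finset.mem_sigma]
    refine ⟨Finset.mem_Icc.mpr ⟨?_, (hb m hm).2⟩, Finset.mem_univ _⟩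
    exact le_trans (hb m hm).1 (Stmt2Aux.Cn_le_W m)
  · intro m _ m' _ hmm
    have h1 : Stmt2Aux.W m = Stmt2Aux.W m' := congrArg Sigma.fst hmm
    apply Stmt2Aux.partOf_inj h1
    exact congrArg (fun s : (Σ ν, Nat.Partition ν) => s.snd.parts) hmm
end

section
/- Let p be an odd prime. Then Σ_{ν=0}^{p-1} p^ν·e_ν(q_p(1),…,q_p(p-1)) = Σ_{ν=0}^{p-1} C(p-1,ν)·(-1)^ν·p^ν·W_p^ν, where e_ν denotes the ν-th elementary symmetric polynomial in p-1 variables (with e_0 = 1) and C(·,·) the binomial coefficient. -/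
open scoped BigOperators

/-- Fermat quotient `q_p(a) = (a^(p-1) - 1)/p` (an integer for `p ∤ a` by Fermat). -/
def fermatQuotient (p a : ℕ) : ℤ := ((a : ℤ) ^ (p - 1) - 1) / (p : ℤ)

/-- Wilson quotient `W_p = ((p-1)! + 1)/p` (an integer by Wilson's theorem). -/
def wilsonQuotient (p : ℕ) : ℤ := (((p - 1).factorial : ℤ) + 1) / (p : ℤ)

theorem stmt4 (p : ℕ) (hp : p.Prime) (hodd : Odd p) :
    ∑ ν ∈ Finset.range p, (p : ℤ) ^ ν *
        ∑ J ∈ (Finset.Icc 1 (p - 1)).powersetCard ν, ∏ a ∈ J, fermatQuotient p a =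
      ∑ ν ∈ Finset.range p,
        ((p - 1).choose ν : ℤ) * (-1) ^ ν * (p : ℤ) ^ ν * wilsonQuotient p ^ ν := by
  haveI := Fact.mk hp
  have hp1 : 1 < p := hp.one_lt
  -- Fermat: p * q_p(a) = a^(p-1) - 1 for 1 ≤ a ≤ p-1
  have hf : ∀ a ∈ Finset.Icc 1 (p - 1),
      (p : ℤ) * fermatQuotient p a = (a : ℤ) ^ (p - 1) - 1 := by
    intro a ha
    obtain ⟨h1, h2⟩ := Finset.mem_Icc.mp ha
    have hnd : ¬ (p : ℕ) ∣ a := by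
      intro h
      have := Nat.le_of_dvd (by omega) h
      omega
    have haz : (a : ZMod p) ≠ 0 := by
      rwa [Ne, ZMod.natCast_eq_zero_iff]
    have h1 : (a : ZMod p) ^ (p - 1) = 1 := ZMod.pow_card_sub_one_eq_one haz
    have hdvd : (p : ℤ) ∣ (a : ℤ) ^ (p - 1) - 1 := by
      rw [← ZMod.intCast_zmod_eq_zero_iff_dvd]
      push_cast
      rw [h1, sub_self]
    rw [fermatQuotient, Int.mul_ediv_cancel' hdvd]
  -- Wilson: p * W_p = (p-1)! + 1
  have hwdvd : (p : ℤ) ∣ ((p - 1).factorial : ℤ) + 1 := by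
    rw [← ZMod.intCast_zmod_eq_zero_iff_dvd]
    push_cast
    rw [ZMod.wilsons_lemma]
    ring
  have hw : (p : ℤ) * wilsonQuotient p = ((p - 1).factorial : ℤ) + 1 := by
    rw [wilsonQuotient, Int.mul_ediv_cancel' hwdvd]
  have hcard : (Finset.Icc 1 (p - 1)).card = p - 1 := by
    rw [Nat.card_Icc]; omega
  have heven : Even (p - 1) := Nat.Odd.sub_odd hodd odd_one
  -- LHS = ((p-1)!)^(p-1)
  have hL : ∑ ν ∈ Finset.range p, (p : ℤ) ^ ν *
        ∑ J ∈ (Finset.Icc 1 (p - 1)).powersetCard ν, ∏ a ∈ J, fermatQuotient p a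
      = (((p - 1).factorial : ℤ)) ^ (p - 1) := by
    have step1 : ∀ ν ∈ Finset.range p, (p : ℤ) ^ ν *
          ∑ J ∈ (Finset.Icc 1 (p - 1)).powersetCard ν, ∏ a ∈ J, fermatQuotient p a
        = ∑ J ∈ (Finset.Icc 1 (p - 1)).powersetCard ν,
            ∏ a ∈ J, ((a : ℤ) ^ (p - 1) - 1) := by
      intro ν _
      rw [Finset.mul_sum]
      refine Finset.sum_congr rfl fun J hJ => ?_
      obtain ⟨hsub, hc⟩ := Finset.mem_powersetCard.mp hJ
      calc (p : ℤ) ^ ν * ∏ a ∈ J, fermatQuotient p a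
          = ∏ a ∈ J, ((p : ℤ) * fermatQuotient p a) := by
            rw [Finset.prod_mul_distrib, Finset.prod_const, hc]
        _ = ∏ a ∈ J, ((a : ℤ) ^ (p - 1) - 1) :=
            Finset.prod_congr rfl fun a ha => hf a (hsub ha)
    rw [Finset.sum_congr rfl step1]
    have hps := Finset.sum_powerset (Finset.Icc 1 (p - 1))
      (fun J => ∏ a ∈ J, ((a : ℤ) ^ (p - 1) - 1))
    rw [hcard, show p - 1 + 1 = p by omega] at hps
    rw [← hps]
    have := Finset.prod_add (fun a : ℕ => ((a : ℤ) ^ (p - 1) - 1)) (fun _ : ℕ => (1 : ℤ))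
      (Finset.Icc 1 (p - 1))
    simp only [Finset.prod_const_one, mul_one] at this
    rw [← this]
    have : ∏ a ∈ Finset.Icc 1 (p - 1), ((a : ℤ) ^ (p - 1) - 1 + 1)
        = ∏ a ∈ Finset.Icc 1 (p - 1), ((a : ℤ)) ^ (p - 1) := by
      refine Finset.prod_congr rfl fun a _ => by ring
    rw [this, Finset.prod_pow]
    congr 1
    rw [← Nat.cast_prod]
    congr 1
    rw [← Finset.Ico_add_one_right_eq_Icc]
    exact Finset.prod_Ico_id_eq_factorial (p - 1)
  -- RHS = ((p-1)!)^(p-1)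
  have hR : ∑ ν ∈ Finset.range p,
        ((p - 1).choose ν : ℤ) * (-1) ^ ν * (p : ℤ) ^ ν * wilsonQuotient p ^ ν
      = (((p - 1).factorial : ℤ)) ^ (p - 1) := by
    have hpow := add_pow (-(((p:ℤ)) * wilsonQuotient p)) 1 (p - 1)
    have hrange : (p - 1) + 1 = p := by omega
    rw [hrange] at hpow
    have hterm : ∀ ν ∈ Finset.range p,
        ((p - 1).choose ν : ℤ) * (-1) ^ ν * (p : ℤ) ^ ν * wilsonQuotient p ^ ν
        = (-(((p:ℤ)) * wilsonQuotient p)) ^ ν * 1 ^ (p - 1 - ν) * ((p - 1).choose ν : ℤ) := by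
      intro ν _
      rw [one_pow, mul_one]
      ring
    rw [Finset.sum_congr rfl hterm, ← hpow, hw]
    have : -((((p - 1).factorial : ℤ)) + 1) + 1 = -(((p - 1).factorial : ℤ)) := by ring
    rw [this, heven.neg_pow]
  rw [hL, hR]
end

section
/- Let p be an odd prime. Then W_p ≡ Σ_{a=1}^{p-1} q_p(a) (mod p). -/
open scoped BigOperators

private lemma aux_prod_one_add (c : ℤ) (s : Finset ℕ) (f : ℕ → ℤ) :
    ∏ a ∈ s, (1 + c * f a) ≡ 1 + c * ∑ a ∈ s, f a [ZMOD c ^ 2] := by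
  classical
  induction s using Finset.induction with
  | empty => simp
  | @insert a s h ih =>
    rw [Finset.prod_insert h, Finset.sum_insert h]
    calc (1 + c * f a) * ∏ x ∈ s, (1 + c * f x)
        ≡ (1 + c * f a) * (1 + c * ∑ x ∈ s, f x) [ZMOD c ^ 2] := ih.mul_left _
      _ ≡ 1 + c * (f a + ∑ x ∈ s, f x) [ZMOD c ^ 2] := by
          apply Int.ModEq.symm
          rw [Int.modEq_iff_dvd]
          refine ⟨f a * ∑ x ∈ s, f x, by ring⟩

private lemma aux_pow (x : ℤ) : ∀ n : ℕ,
    (x - 1) ^ n ≡ (-1) ^ n * (1 - n * x) [ZMOD x ^ 2]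
  | 0 => by simp
  | (n + 1) => by
    have ih := aux_pow x n
    calc (x - 1) ^ (n + 1) = (x - 1) ^ n * (x - 1) := by ring
      _ ≡ (-1) ^ n * (1 - n * x) * (x - 1) [ZMOD x ^ 2] := ih.mul_right _
      _ ≡ (-1) ^ (n + 1) * (1 - (n + 1 : ℕ) * x) [ZMOD x ^ 2] := by
          apply Int.ModEq.symm
          rw [Int.modEq_iff_dvd]
          refine ⟨(-1) ^ n * (-n), by push_cast; ring⟩

theorem stmt8 (p : ℕ) (hp : p.Prime) (hodd : Odd p) :
    wilsonQuotient p ≡ ∑ a ∈ Finset.Icc 1 (p - 1), fermatQuotient p a [ZMOD (p : ℤ)] := by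
  haveI : Fact p.Prime := ⟨hp⟩
  have hp1 : 1 ≤ p := hp.one_lt.le
  have hp0 : (p : ℤ) ≠ 0 := by exact_mod_cast hp.ne_zero
  -- Wilson: p * W = (p-1)! + 1
  have hWdvd : (p : ℤ) ∣ ((p - 1).factorial : ℤ) + 1 := by
    have := ZMod.wilsons_lemma p
    have : ((((p - 1).factorial : ℤ) + 1 : ℤ) : ZMod p) = 0 := by
      push_cast
      rw [this]; ring
    exact (ZMod.intCast_zmod_eq_zero_iff_dvd _ p).mp this
  have hW : (p : ℤ) * wilsonQuotient p = ((p - 1).factorial : ℤ) + 1 := by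
    rw [wilsonQuotient, Int.mul_ediv_cancel' hWdvd]
  -- Fermat: p * q a = a^(p-1) - 1 for a in Icc 1 (p-1)
  have hq : ∀ a ∈ Finset.Icc 1 (p - 1), (p : ℤ) * fermatQuotient p a
      = (a : ℤ) ^ (p - 1) - 1 := by
    intro a ha
    rw [Finset.mem_Icc] at ha
    have hane : (a : ZMod p) ≠ 0 := by
      rw [Ne, ZMod.natCast_eq_zero_iff]
      intro hdvd
      have := Nat.le_of_dvd (by omega) hdvd
      omega
    have hpow : ((a : ZMod p)) ^ (p - 1) = 1 := ZMod.pow_card_sub_one_eq_one hane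
    have hdvd : (p : ℤ) ∣ (a : ℤ) ^ (p - 1) - 1 := by
      have : (((a : ℤ) ^ (p - 1) - 1 : ℤ) : ZMod p) = 0 := by
        push_cast
        rw [hpow]; ring
      exact (ZMod.intCast_zmod_eq_zero_iff_dvd _ p).mp this
    rw [fermatQuotient, Int.mul_ediv_cancel' hdvd]
  -- product of a^(p-1) over Icc 1 (p-1) equals ((p-1)!)^(p-1)
  have hfact : ∏ a ∈ Finset.Icc 1 (p - 1), (a : ℤ) = ((p - 1).factorial : ℤ) := by
    rw [← Nat.cast_prod]
    norm_cast
    rw [show Finset.Icc 1 (p - 1) = Finset.Ico 1 ((p - 1) + 1) by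
      rw [Finset.Ico_add_one_right_eq_Icc]]
    exact Finset.prod_Ico_id_eq_factorial (p - 1)
  have hprod : ∏ a ∈ Finset.Icc 1 (p - 1), (1 + (p : ℤ) * fermatQuotient p a)
      = ((p - 1).factorial : ℤ) ^ (p - 1) := by
    rw [← hfact, ← Finset.prod_pow]
    apply Finset.prod_congr rfl
    intro a ha
    rw [hq a ha]; ring
  -- even exponent
  have heven : Even (p - 1) := by
    obtain ⟨k, hk⟩ := hodd
    exact ⟨k, by omega⟩
  -- main chain mod p^2
  have key : 1 + (p : ℤ) * ∑ a ∈ Finset.Icc 1 (p - 1), fermatQuotient p a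
      ≡ 1 + (p : ℤ) * wilsonQuotient p [ZMOD (p : ℤ) ^ 2] := by
    calc 1 + (p : ℤ) * ∑ a ∈ Finset.Icc 1 (p - 1), fermatQuotient p a
        ≡ ∏ a ∈ Finset.Icc 1 (p - 1), (1 + (p : ℤ) * fermatQuotient p a)
          [ZMOD (p : ℤ) ^ 2] := (aux_prod_one_add _ _ _).symm
      _ = ((p : ℤ) * wilsonQuotient p - 1) ^ (p - 1) := by
          rw [hprod, hW]; ring_nf
      _ ≡ (-1) ^ (p - 1) * (1 - (p - 1 : ℕ) * ((p : ℤ) * wilsonQuotient p))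
          [ZMOD (p : ℤ) ^ 2] := by
          exact (aux_pow ((p : ℤ) * wilsonQuotient p) (p - 1)).of_dvd
            ⟨wilsonQuotient p ^ 2, by ring⟩
      _ ≡ 1 + (p : ℤ) * wilsonQuotient p [ZMOD (p : ℤ) ^ 2] := by
          rw [heven.neg_one_pow, one_mul]
          apply Int.ModEq.symm
          rw [Int.modEq_iff_dvd]
          have hcast : ((p - 1 : ℕ) : ℤ) = (p : ℤ) - 1 := by
            push_cast [Nat.cast_sub hp1]; ring
          refine ⟨-(wilsonQuotient p), ?_⟩
          rw [hcast]; ring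
  -- cancel p
  have hdvd2 : (p : ℤ) ^ 2 ∣ (p : ℤ) * wilsonQuotient p
      - (p : ℤ) * ∑ a ∈ Finset.Icc 1 (p - 1), fermatQuotient p a := by
    have := (Int.modEq_iff_dvd.mp key)
    simpa using this
  have hfin : (p : ℤ) ∣ wilsonQuotient p - ∑ a ∈ Finset.Icc 1 (p - 1), fermatQuotient p a := by
    rw [← mul_dvd_mul_iff_left hp0]
    calc (p : ℤ) * (p : ℤ) = (p : ℤ) ^ 2 := by ring
      _ ∣ _ := by
        refine hdvd2.trans (dvd_of_eq ?_)
        ring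
  exact (Int.modEq_iff_dvd.mpr (by simpa using hfin)).symm
end

section
/- Let p be an odd прime. Then 2·W_p ≡ 2·Q_p(1) + p·(2·Q_p(1) - Q_p(1)² - Q_p(2)) (mod p²). -/
open scoped BigOperators

/-- `Q_p(n) = ∑_{a=1}^{p-1} q_p(a)^n`. -/
def Qp (p n : ℕ) : ℤ := ∑ a ∈ Finset.Icc 1 (p - 1), fermatQuotient p a ^ n

/-- Second-order expansion of a product of `1 + x a` with all `x a` divisible by `P`. -/
lemma prod_one_add_expand (P : ℤ) (s : Finset ℕ) (x : ℕ → ℤ)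
    (hx : ∀ a ∈ s, P ∣ x a) :
    2 * ∏ a ∈ s, (1 + x a) ≡
      2 + 2 * (∑ a ∈ s, x a) + (∑ a ∈ s, x a) ^ 2 - ∑ a ∈ s, x a ^ 2 [ZMOD P ^ 3] := by
  classical
  induction s using Finset.induction_on with
  | empty => simp
  | @insert a s ha ih =>
    have hxa : P ∣ x a := hx a (Finset.mem_insert_self a s)
    have hx' : ∀ b ∈ s, P ∣ x b := fun b hb => hx b (Finset.mem_insert_of_mem hb)
    have ih' := ih hx'
    rw [Finset.prod_insert ha, Finset.sum_insert ha, Finset.sum_insert ha]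
    set S1 := ∑ b ∈ s, x b with hS1def
    set S2 := ∑ b ∈ s, x b ^ 2 with hS2def
    have hS1 : P ∣ S1 := Finset.dvd_sum hx'
    have hS1sq : P ^ 2 ∣ S1 ^ 2 := pow_dvd_pow_of_dvd hS1 2
    have hS2 : P ^ 2 ∣ S2 := Finset.dvd_sum fun b hb => pow_dvd_pow_of_dvd (hx' b hb) 2
    have hdvd : P ^ 3 ∣ x a * (S2 - S1 ^ 2) := by
      rw [show (P : ℤ) ^ 3 = P * P ^ 2 by ring]
      exact mul_dvd_mul hxa (dvd_sub hS2 hS1sq)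
    calc 2 * ((1 + x a) * ∏ b ∈ s, (1 + x b))
        = (1 + x a) * (2 * ∏ b ∈ s, (1 + x b)) := by ring
      _ ≡ (1 + x a) * (2 + 2 * S1 + S1 ^ 2 - S2) [ZMOD P ^ 3] := ih'.mul_left _
      _ ≡ 2 + 2 * (x a + S1) + (x a + S1) ^ 2 - (x a ^ 2 + S2) [ZMOD P ^ 3] := by
          have h : P ^ 3 ∣ (2 + 2 * (x a + S1) + (x a + S1) ^ 2 - (x a ^ 2 + S2))
              - (1 + x a) * (2 + 2 * S1 + S1 ^ 2 - S2) := by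
            rw [show (2 + 2 * (x a + S1) + (x a + S1) ^ 2 - (x a ^ 2 + S2))
                - (1 + x a) * (2 + 2 * S1 + S1 ^ 2 - S2) = x a * (S2 - S1 ^ 2) by ring]
            exact hdvd
          exact Int.modEq_iff_dvd.mpr (by simpa using h)

theorem stmt9 (p : ℕ) (hp : p.Prime) (hodd : Odd p) :
    2 * wilsonQuotient p ≡
      2 * Qp p 1 + (p : ℤ) * (2 * Qp p 1 - Qp p 1 ^ 2 - Qp p 2) [ZMOD (p : ℤ) ^ 2] := by
  classical
  haveI : Fact p.Prime := ⟨hp⟩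
  have hp1 : 1 ≤ p := hp.one_lt.le.trans' (by norm_num)
  set P : ℤ := (p : ℤ) with hPdef
  have hP0 : P ≠ 0 := by
    simp only [hPdef, Ne, Nat.cast_eq_zero]
    exact hp.ne_zero
  set W : ℤ := wilsonQuotient p with hWdef
  set Q1 : ℤ := Qp p 1 with hQ1def
  set Q2 : ℤ := Qp p 2 with hQ2def
  -- Fermat quotient identity
  have hq : ∀ a ∈ Finset.Icc 1 (p - 1), 1 + P * fermatQuotient p a = (a : ℤ) ^ (p - 1) := by
    intro a ha
    rw [Finset.mem_Icc] at ha
    have hpa : ¬ (p ∣ a) := by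
      intro hdvd
      have := Nat.le_of_dvd (by omega) hdvd
      omega
    have hz : ((a : ZMod p)) ≠ 0 := by
      rw [Ne, ZMod.natCast_eq_zero_iff]
      exact hpa
    have hferm : (a : ZMod p) ^ (p - 1) = 1 := ZMod.pow_card_sub_one_eq_one hz
    have hdvd : P ∣ (a : ℤ) ^ (p - 1) - 1 := by
      rw [hPdef, ← ZMod.intCast_zmod_eq_zero_iff_dvd]
      push_cast
      rw [hferm]
      ring
    unfold fermatQuotient
    rw [← hPdef]
    linarith [Int.ediv_mul_cancel hdvd]
  -- Wilson quotient identity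
  have hWdvd : P ∣ ((p - 1).factorial : ℤ) + 1 := by
    rw [hPdef, ← ZMod.intCast_zmod_eq_zero_iff_dvd]
    push_cast
    rw [ZMod.wilsons_lemma]
    ring
  have hWeq : ((p - 1).factorial : ℤ) = P * W - 1 := by
    rw [hWdef]
    unfold wilsonQuotient
    rw [← hPdef]
    linarith [Int.ediv_mul_cancel hWdvd]
  -- Apply expansion over Icc 1 (p-1)
  have hx : ∀ a ∈ Finset.Icc 1 (p - 1), P ∣ P * fermatQuotient p a :=
    fun a _ => Dvd.intro _ rfl
  have C1 := prod_one_add_expand P (Finset.Icc 1 (p - 1)) (fun a => P * fermatQuotient p a) hx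
  have hfact : ∏ x ∈ Finset.Icc 1 (p - 1), (x : ℤ) = ((p - 1).factorial : ℤ) := by
    rw [← Nat.cast_prod, ← Finset.Ico_add_one_right_eq_Icc, Finset.prod_Ico_id_eq_factorial]
  have hprod : ∏ a ∈ Finset.Icc 1 (p - 1), (1 + P * fermatQuotient p a)
      = (P * W - 1) ^ (p - 1) := by
    rw [Finset.prod_congr rfl hq, Finset.prod_pow, hfact, hWeq]
  have hsum1 : ∑ a ∈ Finset.Icc 1 (p - 1), P * fermatQuotient p a = P * Q1 := by
    rw [hQ1def]
    unfold Qp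
    rw [Finset.mul_sum]
    simp [pow_one]
  have hsum2 : ∑ a ∈ Finset.Icc 1 (p - 1), (P * fermatQuotient p a) ^ 2 = P ^ 2 * Q2 := by
    rw [hQ2def]
    unfold Qp
    rw [Finset.mul_sum]
    simp [mul_pow]
  simp only [hprod, hsum1, hsum2] at C1
  -- even exponent
  have heven : Even (p - 1) := Nat.Odd.sub_odd hodd odd_one
  have hpow : (P * W - 1) ^ (p - 1) = (1 + -(P * W)) ^ (p - 1) := by
    rw [show P * W - 1 = -(1 + -(P * W)) by ring, Even.neg_pow heven]
  rw [hpow] at C1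
  -- constant-case expansion
  have C2 := prod_one_add_expand P (Finset.range (p - 1)) (fun _ => -(P * W))
    (fun a _ => (Dvd.intro _ rfl : P ∣ P * W).neg_right)
  simp only [Finset.prod_const, Finset.sum_const, Finset.card_range, nsmul_eq_mul] at C2
  have hn : ((p - 1 : ℕ) : ℤ) = P - 1 := by
    rw [Nat.cast_sub hp1, Nat.cast_one, hPdef]
  rw [hn] at C2
  have key := C1.symm.trans C2
  have hdvd3 := Int.ModEq.dvd key
  -- divide by P
  have hPD : (2 + 2 * ((P - 1) * -(P * W)) + ((P - 1) * -(P * W)) ^ 2 - (P - 1) * (-(P * W)) ^ 2)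
      - (2 + 2 * (P * Q1) + (P * Q1) ^ 2 - P ^ 2 * Q2)
      = P * (-2 * (P - 1) * W + ((P - 1) ^ 2 - (P - 1)) * P * W ^ 2
          - 2 * Q1 - P * Q1 ^ 2 + P * Q2) := by ring
  rw [hPD] at hdvd3
  rw [show (P : ℤ) ^ 3 = P * P ^ 2 by ring] at hdvd3
  have hdvd2 : P ^ 2 ∣ (-2 * (P - 1) * W + ((P - 1) ^ 2 - (P - 1)) * P * W ^ 2
      - 2 * Q1 - P * Q1 ^ 2 + P * Q2) := (mul_dvd_mul_iff_left hP0).mp hdvd3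
  -- mod p: W ≡ Q1
  have hD1 : P ∣ (-2 * (P - 1) * W + ((P - 1) ^ 2 - (P - 1)) * P * W ^ 2
      - 2 * Q1 - P * Q1 ^ 2 + P * Q2) :=
    dvd_trans (dvd_pow_self P two_ne_zero) hdvd2
  have h2WQ : P ∣ 2 * (W - Q1) := by
    rw [show 2 * (W - Q1) = (-2 * (P - 1) * W + ((P - 1) ^ 2 - (P - 1)) * P * W ^ 2
        - 2 * Q1 - P * Q1 ^ 2 + P * Q2)
      - P * (-2 * W + ((P - 1) ^ 2 - (P - 1)) * W ^ 2 - Q1 ^ 2 + Q2) by ring]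
    exact dvd_sub hD1 ⟨_, rfl⟩
  have hprime : Prime P := Nat.prime_iff_prime_int.mp hp
  have hnot2 : ¬ (P ∣ 2) := by
    intro h
    rw [hPdef, show (2 : ℤ) = ((2 : ℕ) : ℤ) by norm_num, Int.natCast_dvd_natCast] at h
    have := (Nat.prime_dvd_prime_iff_eq hp Nat.prime_two).mp h
    rcases hodd with ⟨k, hk⟩
    omega
  have hWQ : P ∣ W - Q1 := (hprime.dvd_mul.mp h2WQ).resolve_left hnot2
  obtain ⟨c, hc⟩ := hWQ
  have hW3 : W = Q1 + P * c := by linarith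
  obtain ⟨m, hm⟩ := hdvd2
  rw [hW3] at hm ⊢
  refine Int.modEq_iff_dvd.mpr ⟨-(m + (2 * c - 4 * Q1 * c + 3 * Q1 ^ 2 - 2 * P * c ^ 2
    + 6 * P * Q1 * c - P * Q1 ^ 2 + 3 * P ^ 2 * c ^ 2 - 2 * P ^ 2 * Q1 * c - P ^ 3 * c ^ 2)), ?_⟩
  linear_combination -hm
end

section
/- Let p be a prime with p > 3. Then 6·W_p ≡ 6·Q_p(1) + 3·p·(2·Q_p(1) - Q_p(1)² - Q_p(2)) + p²·(6·Q_p(1) - 6·Q_p(1)² + Q_p(1)³ + 3·Q_p(1)·Q_p(2) - 3·Q_p(2) + 2·Q_p(3)) (mod p³). -/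
open scoped BigOperators

private lemma binom3 (x : ℤ) (n : ℕ) :
    6 * (1 + x) ^ n ≡
      6 + 6 * (n : ℤ) * x + 3 * (n : ℤ) * ((n : ℤ) - 1) * x ^ 2
        + (n : ℤ) * ((n : ℤ) - 1) * ((n : ℤ) - 2) * x ^ 3 [ZMOD x ^ 4] := by
  induction n with
  | zero => simp
  | succ n ih =>
    have h1 : (6 : ℤ) * (1 + x) ^ (n + 1) = (1 + x) * (6 * (1 + x) ^ n) := by ring
    rw [h1]
    refine (ih.mul_left (1 + x)).trans ?_
    rw [Int.modEq_iff_dvd]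
    exact ⟨-(n : ℤ) ^ 3 + 3 * (n : ℤ) ^ 2 - 2 * (n : ℤ), by push_cast; ring⟩

private lemma prod_expand (m : ℤ) (f : ℕ → ℤ) (s : Finset ℕ) :
    6 * ∏ a ∈ s, (1 + m * f a) ≡
      6 + 6 * m * (∑ a ∈ s, f a)
        + 3 * m ^ 2 * ((∑ a ∈ s, f a) ^ 2 - ∑ a ∈ s, f a ^ 2)
        + m ^ 3 * ((∑ a ∈ s, f a) ^ 3 - 3 * (∑ a ∈ s, f a) * (∑ a ∈ s, f a ^ 2)
            + 2 * ∑ a ∈ s, f a ^ 3) [ZMOD m ^ 4] := by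
  classical
  induction s using Finset.induction_on with
  | empty => simp
  | @insert a s ha ih =>
    rw [Finset.prod_insert ha, Finset.sum_insert ha, Finset.sum_insert ha, Finset.sum_insert ha]
    have h1 : 6 * ((1 + m * f a) * ∏ x ∈ s, (1 + m * f x))
        = (1 + m * f a) * (6 * ∏ x ∈ s, (1 + m * f x)) := by ring
    rw [h1]
    refine (ih.mul_left (1 + m * f a)).trans ?_
    rw [Int.modEq_iff_dvd]
    exact ⟨-(f a * (∑ x ∈ s, f x) ^ 3) + 3 * f a * (∑ x ∈ s, f x) * (∑ x ∈ s, f x ^ 2)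
      - 2 * f a * (∑ x ∈ s, f x ^ 3), by ring⟩

theorem stmt10 (p : ℕ) (hp : p.Prime) (hp3 : 3 < p) :
    6 * wilsonQuotient p ≡
      6 * Qp p 1 + 3 * (p : ℤ) * (2 * Qp p 1 - Qp p 1 ^ 2 - Qp p 2) +
        (p : ℤ) ^ 2 * (6 * Qp p 1 - 6 * Qp p 1 ^ 2 + Qp p 1 ^ 3 + 3 * Qp p 1 * Qp p 2
          - 3 * Qp p 2 + 2 * Qp p 3) [ZMOD (p : ℤ) ^ 3] := by
  haveI : Fact p.Prime := ⟨hp⟩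
  have hp1 : 1 ≤ p := hp.one_lt.le
  have hp0 : (p : ℤ) ≠ 0 := by exact_mod_cast hp.pos.ne'
  have hprime : Prime (p : ℤ) := Nat.prime_iff_prime_int.mp hp
  set W := wilsonQuotient p with hWdef
  set Q1 := Qp p 1 with hQ1def
  set Q2 := Qp p 2 with hQ2def
  set Q3 := Qp p 3 with hQ3def
  -- Fermat's little theorem in quotient form
  have hferm : ∀ a ∈ Finset.Icc 1 (p - 1),
      (1 : ℤ) + (p : ℤ) * fermatQuotient p a = (a : ℤ) ^ (p - 1) := by
    intro a ha
    simp only [Finset.mem_Icc] at ha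
    have hnd : ¬ (p ∣ a) := by
      intro hdvd
      have := Nat.le_of_dvd (by omega) hdvd
      omega
    have hz : ((a : ZMod p) ≠ 0) := by
      rw [Ne, ZMod.natCast_eq_zero_iff]
      exact hnd
    have hfl : (a : ZMod p) ^ (p - 1) = 1 := ZMod.pow_card_sub_one_eq_one hz
    have hdvd : (p : ℤ) ∣ (a : ℤ) ^ (p - 1) - 1 := by
      have h0 : (((a : ℤ) ^ (p - 1) - 1 : ℤ) : ZMod p) = 0 := by
        push_cast
        rw [hfl]
        ring
      exact (ZMod.intCast_zmod_eq_zero_iff_dvd _ p).mp h0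
    rw [fermatQuotient, Int.mul_ediv_cancel' hdvd]
    ring
  -- Wilson's theorem in quotient form
  have hWil : ((p - 1).factorial : ℤ) = (p : ℤ) * W - 1 := by
    have hdvd : (p : ℤ) ∣ ((p - 1).factorial : ℤ) + 1 := by
      have h0 : ((((p - 1).factorial : ℤ) + 1 : ℤ) : ZMod p) = 0 := by
        push_cast
        rw [ZMod.wilsons_lemma]
        ring
      exact (ZMod.intCast_zmod_eq_zero_iff_dvd _ p).mp h0
    rw [hWdef, wilsonQuotient, Int.mul_ediv_cancel' hdvd]
    ring
  -- the product of the Fermat factors is the factorial power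
  have hprodfact : ∏ a ∈ Finset.Icc 1 (p - 1), ((1 : ℤ) + (p : ℤ) * fermatQuotient p a)
      = ((p - 1).factorial : ℤ) ^ (p - 1) := by
    rw [Finset.prod_congr rfl hferm, Finset.prod_pow]
    congr 1
    rw [← Nat.cast_prod, ← Finset.Ico_add_one_right_eq_Icc, Finset.prod_Ico_id_eq_factorial]
  have hodd : Odd p := hp.odd_of_ne_two (by omega)
  have heven : Even (p - 1) := Nat.Odd.sub_odd hodd odd_one
  have hpw : ((p - 1).factorial : ℤ) ^ (p - 1) = (1 + -((p : ℤ) * W)) ^ (p - 1) := by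
    rw [hWil, show ((p : ℤ) * W - 1) = -(1 + -((p : ℤ) * W)) by ring, heven.neg_pow]
  have hQ1s : ∑ a ∈ Finset.Icc 1 (p - 1), fermatQuotient p a = Q1 := by
    rw [hQ1def]
    simp [Qp]
  have hQ2s : ∑ a ∈ Finset.Icc 1 (p - 1), fermatQuotient p a ^ 2 = Q2 := rfl
  have hQ3s : ∑ a ∈ Finset.Icc 1 (p - 1), fermatQuotient p a ^ 3 = Q3 := rfl
  have hC := prod_expand (p : ℤ) (fermatQuotient p) (Finset.Icc 1 (p - 1))
  rw [hprodfact, hpw, hQ1s, hQ2s, hQ3s] at hC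
  have hdvd4 : ((p : ℤ)) ^ 4 ∣ (-((p : ℤ) * W)) ^ 4 := ⟨W ^ 4, by ring⟩
  have hD := (binom3 (-((p : ℤ) * W)) (p - 1)).of_dvd hdvd4
  have hAB := hC.symm.trans hD
  obtain ⟨c, hc0⟩ := Int.ModEq.dvd hAB
  have hcast : ((p - 1 : ℕ) : ℤ) = (p : ℤ) - 1 := by
    push_cast [Nat.cast_sub hp1]
    ring
  rw [hcast] at hc0
  -- first cancellation of p
  have hc1 : - (p:ℤ)^5*W^3 + 6*(p:ℤ)^4*W^3 - 11*(p:ℤ)^3*W^3 + 3*(p:ℤ)^3*W^2 + 6*(p:ℤ)^2*W^3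
      - 9*(p:ℤ)^2*W^2 - (p:ℤ)^2*Q1^3 + 3*(p:ℤ)^2*Q1*Q2 - 2*(p:ℤ)^2*Q3 + 6*(p:ℤ)*W^2 - 6*(p:ℤ)*W
      - 3*(p:ℤ)*Q1^2 + 3*(p:ℤ)*Q2 + 6*W - 6*Q1 = (p:ℤ)^3 * c :=
    mul_left_cancel₀ hp0 (by linear_combination hc0)
  have hnp6 : ¬ ((p : ℤ) ∣ 6) := by
    intro h
    have h' : p ∣ 6 := by exact_mod_cast h
    have h'' : p ∣ 2 * 3 := by norm_num; exact h'
    rcases (Nat.Prime.dvd_mul hp).mp h'' with h2 | h3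
    · have := Nat.le_of_dvd (by norm_num) h2; omega
    · have := Nat.le_of_dvd (by norm_num) h3; omega
  have h1 : (p:ℤ) ∣ 6 * (W - Q1) :=
    ⟨(p:ℤ)^2 * c - (- (p:ℤ)^4*W^3 + 6*(p:ℤ)^3*W^3 - 11*(p:ℤ)^2*W^3 + 3*(p:ℤ)^2*W^2 + 6*(p:ℤ)*W^3
      - 9*(p:ℤ)*W^2 - (p:ℤ)*Q1^3 + 3*(p:ℤ)*Q1*Q2 - 2*(p:ℤ)*Q3 + 6*W^2 - 6*W - 3*Q1^2 + 3*Q2),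
      by linear_combination hc1⟩
  have h1' : (p:ℤ) ∣ (W - Q1) := (hprime.dvd_mul.mp h1).resolve_left hnp6
  obtain ⟨al, hal⟩ := h1'
  have halW : W = Q1 + (p:ℤ) * al := by linarith
  rw [halW] at hc1
  -- second cancellation of p
  have hc2 : (- 11*(p:ℤ)^2*Q1^3 + 18*(p:ℤ)^2*Q1^2*al + 3*(p:ℤ)^2*Q1^2 - 18*(p:ℤ)^2*Q1*al
      + 6*(p:ℤ)^2*al^2 + 5*(p:ℤ)*Q1^3 - 9*(p:ℤ)*Q1^2 + 3*(p:ℤ)*Q1*Q2 + 12*(p:ℤ)*Q1*al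
      - 2*(p:ℤ)*Q3 - 6*(p:ℤ)*al + 3*Q1^2 - 6*Q1 + 3*Q2 + 6*al)
      + (p:ℤ)^3 * (- (p:ℤ)^4*al^3 - 3*(p:ℤ)^3*Q1*al^2 + 6*(p:ℤ)^3*al^3 - 3*(p:ℤ)^2*Q1^2*al
      + 18*(p:ℤ)^2*Q1*al^2 - 11*(p:ℤ)^2*al^3 - (p:ℤ)*Q1^3 + 18*(p:ℤ)*Q1^2*al - 33*(p:ℤ)*Q1*al^2
      + 6*(p:ℤ)*al^3 + 3*(p:ℤ)*al^2 + 6*Q1^3 - 33*Q1^2*al + 18*Q1*al^2 + 6*Q1*al - 9*al^2)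
      = (p:ℤ)^2 * c :=
    mul_left_cancel₀ hp0 (by linear_combination hc1)
  obtain ⟨c2, hc2'⟩ : ((p:ℤ))^2 ∣ (- 11*(p:ℤ)^2*Q1^3 + 18*(p:ℤ)^2*Q1^2*al + 3*(p:ℤ)^2*Q1^2
      - 18*(p:ℤ)^2*Q1*al + 6*(p:ℤ)^2*al^2 + 5*(p:ℤ)*Q1^3 - 9*(p:ℤ)*Q1^2 + 3*(p:ℤ)*Q1*Q2
      + 12*(p:ℤ)*Q1*al - 2*(p:ℤ)*Q3 - 6*(p:ℤ)*al + 3*Q1^2 - 6*Q1 + 3*Q2 + 6*al) :=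
    ⟨c - (p:ℤ) * (- (p:ℤ)^4*al^3 - 3*(p:ℤ)^3*Q1*al^2 + 6*(p:ℤ)^3*al^3 - 3*(p:ℤ)^2*Q1^2*al
      + 18*(p:ℤ)^2*Q1*al^2 - 11*(p:ℤ)^2*al^3 - (p:ℤ)*Q1^3 + 18*(p:ℤ)*Q1^2*al - 33*(p:ℤ)*Q1*al^2
      + 6*(p:ℤ)*al^3 + 3*(p:ℤ)*al^2 + 6*Q1^3 - 33*Q1^2*al + 18*Q1*al^2 + 6*Q1*al - 9*al^2),
      by linear_combination hc2⟩
  have h2 : (p:ℤ) ∣ 6*al - (6*Q1 - 3*Q1^2 - 3*Q2) :=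
    ⟨(p:ℤ)*c2 - (- 11*(p:ℤ)*Q1^3 + 18*(p:ℤ)*Q1^2*al + 3*(p:ℤ)*Q1^2 - 18*(p:ℤ)*Q1*al
      + 6*(p:ℤ)*al^2 + 5*Q1^3 - 9*Q1^2 + 3*Q1*Q2 + 12*Q1*al - 2*Q3 - 6*al),
      by linear_combination hc2'⟩
  obtain ⟨be, hbe⟩ := h2
  -- third cancellation of p
  have hg0 : (p:ℤ) * (36*(p:ℤ)^3*be^2 + 432*(p:ℤ)^2*Q1^2*be - 216*(p:ℤ)^2*Q1*be
      - 216*(p:ℤ)^2*Q2*be - 1620*(p:ℤ)*Q1^4 + 2160*(p:ℤ)*Q1^3 - 1296*(p:ℤ)*Q1^2*Q2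
      - 1944*(p:ℤ)*Q1^2 + 648*(p:ℤ)*Q1*Q2 + 432*(p:ℤ)*Q1*be + 324*(p:ℤ)*Q2^2 - 216*(p:ℤ)*c2
      - 216*(p:ℤ)*be - 216*Q1^3 + 1296*Q1^2 - 648*Q1*Q2 - 1296*Q1 + 648*Q2 - 432*Q3 + 216*be)
      = (p:ℤ) * 0 := by
    linear_combination 216 * hc2' - (36*(p:ℤ)^3*be + 540*(p:ℤ)^2*Q1^2 - 432*(p:ℤ)^2*Q1
      - 108*(p:ℤ)^2*Q2 + 216*(p:ℤ)^2*al + 432*(p:ℤ)*Q1 - 216*(p:ℤ) + 216) * hbe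
  have hg3 := mul_left_cancel₀ hp0 hg0
  have hnp216 : ¬ ((p : ℤ) ∣ 216) := by
    intro h
    have h' : p ∣ 216 := by exact_mod_cast h
    have h'' : p ∣ 2 ^ 3 * 3 ^ 3 := by norm_num; exact h'
    rcases (Nat.Prime.dvd_mul hp).mp h'' with h8 | h27
    · have := Nat.le_of_dvd (by norm_num) (hp.dvd_of_dvd_pow h8); omega
    · have := Nat.le_of_dvd (by norm_num) (hp.dvd_of_dvd_pow h27); omega
  have h3 : (p:ℤ) ∣ 216 * (be - (6*Q1 - 6*Q1^2 + Q1^3 + 3*Q1*Q2 - 3*Q2 + 2*Q3)) :=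
    ⟨-(36*(p:ℤ)^2*be^2 + 432*(p:ℤ)*Q1^2*be - 216*(p:ℤ)*Q1*be - 216*(p:ℤ)*Q2*be - 1620*Q1^4
      + 2160*Q1^3 - 1296*Q1^2*Q2 - 1944*Q1^2 + 648*Q1*Q2 + 432*Q1*be + 324*Q2^2 - 216*c2
      - 216*be), by linear_combination hg3⟩
  have h3' : (p:ℤ) ∣ (be - (6*Q1 - 6*Q1^2 + Q1^3 + 3*Q1*Q2 - 3*Q2 + 2*Q3)) :=
    (hprime.dvd_mul.mp h3).resolve_left hnp216
  obtain ⟨ga, hga⟩ := h3'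
  -- conclude
  rw [Int.modEq_iff_dvd, halW]
  exact ⟨-ga, by linear_combination (-(p:ℤ)) * hbe - (p:ℤ)^2 * hga⟩
end

section
/- Let p be an odd prime. Then (p-1)! ≡ -1 + p·Σ_{a=1}^{p-1} q_p(a) (mod p²). -/
open scoped BigOperators

private lemma one_add_pow_mod_sq (y : ℤ) : ∀ n : ℕ, (1 + y) ^ n ≡ 1 + n * y [ZMOD y ^ 2]
  | 0 => by simp
  | n + 1 => by
    have ih := one_add_pow_mod_sq y n
    have h1 : (1 + y) ^ (n + 1) = (1 + y) ^ n * (1 + y) := by ring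
    have h2 : (1 + (n : ℤ) * y) * (1 + y) ≡ 1 + ((n : ℤ) + 1) * y [ZMOD y ^ 2] := by
      have : (1 + (n : ℤ) * y) * (1 + y) = 1 + ((n : ℤ) + 1) * y + n * y ^ 2 := by ring
      rw [this]
      have h0 : (n : ℤ) * y ^ 2 ≡ 0 [ZMOD y ^ 2] := Int.modEq_zero_iff_dvd.mpr ⟨n, by ring⟩
      simpa using h0.add_left (1 + ((n : ℤ) + 1) * y)
    calc (1 + y) ^ (n + 1) = (1 + y) ^ n * (1 + y) := h1
      _ ≡ (1 + (n : ℤ) * y) * (1 + y) [ZMOD y ^ 2] := ih.mul_right _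
      _ ≡ 1 + ((n : ℤ) + 1) * y [ZMOD y ^ 2] := h2
      _ = 1 + ((n + 1 : ℕ) : ℤ) * y := by push_cast; ring

private lemma prod_one_add_mul (c : ℤ) (f : ℕ → ℤ) (s : Finset ℕ) :
    ∏ a ∈ s, (1 + c * f a) ≡ 1 + c * ∑ a ∈ s, f a [ZMOD c ^ 2] := by
  classical
  induction s using Finset.induction_on with
  | empty => simp
  | insert b s h ih =>
    rw [Finset.prod_insert h, Finset.sum_insert h]
    calc (1 + c * f b) * ∏ a ∈ s, (1 + c * f a)
        ≡ (1 + c * f b) * (1 + c * ∑ a ∈ s, f a) [ZMOD c ^ 2] := ih.mul_left _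
      _ ≡ 1 + c * (f b + ∑ a ∈ s, f a) [ZMOD c ^ 2] := by
          have : (1 + c * f b) * (1 + c * ∑ a ∈ s, f a)
              = 1 + c * (f b + ∑ a ∈ s, f a) + (f b * ∑ a ∈ s, f a) * c ^ 2 := by ring
          rw [this]
          have h0 : (f b * ∑ a ∈ s, f a) * c ^ 2 ≡ 0 [ZMOD c ^ 2] :=
            Int.modEq_zero_iff_dvd.mpr ⟨_, mul_comm _ _⟩
          simpa using h0.add_left (1 + c * (f b + ∑ a ∈ s, f a))

theorem stmt11 (p : ℕ) (hp : p.Prime) (hodd : Odd p) :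
    ((p - 1).factorial : ℤ) ≡
      -1 + (p : ℤ) * ∑ a ∈ Finset.Icc 1 (p - 1), fermatQuotient p a [ZMOD (p : ℤ) ^ 2] := by
  haveI : Fact p.Prime := ⟨hp⟩
  have hp1 : 1 ≤ p := hp.one_lt.le
  -- Fermat: a^(p-1) = 1 + p * q_p(a) for a ∈ [1, p-1]
  have hfermat : ∀ a ∈ Finset.Icc 1 (p - 1),
      (a : ℤ) ^ (p - 1) = 1 + (p : ℤ) * fermatQuotient p a := by
    intro a ha
    rw [Finset.mem_Icc] at ha
    have hdvd : (p : ℤ) ∣ (a : ℤ) ^ (p - 1) - 1 := by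
      have hne : (a : ZMod p) ≠ 0 := by
        rw [Ne, ZMod.natCast_eq_zero_iff]
        intro hd
        have := Nat.le_of_dvd (by omega) hd
        omega
      have hone := ZMod.pow_card_sub_one_eq_one hne
      have hz : (((a : ℤ) ^ (p - 1) - 1 : ℤ) : ZMod p) = 0 := by
        push_cast
        simp [hone]
      exact (ZMod.intCast_zmod_eq_zero_iff_dvd _ _).mp hz
    rw [fermatQuotient, Int.mul_ediv_cancel' hdvd]; ring
  -- Wilson: (p-1)! = p * W - 1
  have hwdvd : (p : ℤ) ∣ ((p - 1).factorial : ℤ) + 1 := by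
    have := ZMod.wilsons_lemma p
    have h0 : (((p - 1).factorial : ℤ) + 1 : ZMod p) = 0 := by push_cast [this]; ring
    exact (ZMod.intCast_zmod_eq_zero_iff_dvd _ _).mp (by exact_mod_cast h0)
  have hwilson : ((p - 1).factorial : ℤ) = (p : ℤ) * wilsonQuotient p - 1 := by
    rw [wilsonQuotient, Int.mul_ediv_cancel' hwdvd]; ring
  set W := wilsonQuotient p with hW
  set S := ∑ a ∈ Finset.Icc 1 (p - 1), fermatQuotient p a with hS
  -- factorial as product
  have hfac : ((p - 1).factorial : ℤ) = ∏ a ∈ Finset.Icc 1 (p - 1), (a : ℤ) := by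
    rw [← Nat.cast_prod]
    congr 1
    rw [← Finset.Ico_add_one_right_eq_Icc, Nat.sub_add_cancel hp1,
      ← Finset.prod_Ico_id_eq_factorial]
    have : p - 1 + 1 = p := Nat.sub_add_cancel hp1
    rw [this]
  -- key congruence: ((p-1)!)^(p-1) ≡ 1 + p * S
  have h1 : ((p - 1).factorial : ℤ) ^ (p - 1) ≡ 1 + (p : ℤ) * S [ZMOD (p : ℤ) ^ 2] := by
    rw [hfac, ← Finset.prod_pow]
    calc ∏ a ∈ Finset.Icc 1 (p - 1), (a : ℤ) ^ (p - 1)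
        = ∏ a ∈ Finset.Icc 1 (p - 1), (1 + (p : ℤ) * fermatQuotient p a) :=
          Finset.prod_congr rfl hfermat
      _ ≡ 1 + (p : ℤ) * S [ZMOD (p : ℤ) ^ 2] := prod_one_add_mul _ _ _
  -- other side: ((p-1)!)^(p-1) ≡ 1 + p * W
  have heven : Even (p - 1) := Nat.Odd.sub_odd hodd odd_one
  have h2 : ((p - 1).factorial : ℤ) ^ (p - 1) ≡ 1 + (p : ℤ) * W [ZMOD (p : ℤ) ^ 2] := by
    rw [hwilson]
    have hneg : ((p : ℤ) * W - 1) ^ (p - 1) = (1 + (-((p : ℤ) * W))) ^ (p - 1) := by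
      rw [show (1 + (-((p : ℤ) * W))) = -((p : ℤ) * W - 1) by ring, heven.neg_pow]
    rw [hneg]
    have hb := one_add_pow_mod_sq (-((p : ℤ) * W)) (p - 1)
    have hdvd2 : ((p : ℤ) ^ 2) ∣ (-((p : ℤ) * W)) ^ 2 := ⟨W ^ 2, by ring⟩
    have hb' : (1 + (-((p : ℤ) * W))) ^ (p - 1) ≡ 1 + ((p - 1 : ℕ) : ℤ) * (-((p : ℤ) * W))
        [ZMOD (p : ℤ) ^ 2] := hb.of_dvd hdvd2
    refine hb'.trans ?_
    have hcast : ((p - 1 : ℕ) : ℤ) = (p : ℤ) - 1 := by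
      push_cast [Nat.cast_sub hp1]; ring
    rw [hcast]
    have : 1 + ((p : ℤ) - 1) * (-((p : ℤ) * W)) = 1 + (p : ℤ) * W + (-W) * (p : ℤ) ^ 2 := by
      ring
    rw [this]
    have h0 : (-W) * (p : ℤ) ^ 2 ≡ 0 [ZMOD (p : ℤ) ^ 2] :=
      Int.modEq_zero_iff_dvd.mpr ⟨_, mul_comm _ _⟩
    simpa using h0.add_left (1 + (p : ℤ) * W)
  -- combine
  have h3 : (1 : ℤ) + (p : ℤ) * W ≡ 1 + (p : ℤ) * S [ZMOD (p : ℤ) ^ 2] := h2.symm.trans h1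
  have h4 : (p : ℤ) * W ≡ (p : ℤ) * S [ZMOD (p : ℤ) ^ 2] := by
    have := h3.sub_left ((1 : ℤ) + (p : ℤ) * W + (p : ℤ) * S)
    simpa using (Int.ModEq.add_left (-1) h3)
  calc ((p - 1).factorial : ℤ) = -1 + (p : ℤ) * W := by rw [hwilson]; ring
    _ ≡ -1 + (p : ℤ) * S [ZMOD (p : ℤ) ^ 2] := Int.ModEq.add_left _ h4
end

section
/- For every n ≥ 1, the maximum partition order of ψ_n satisfies ‖ψ_n‖ = n; that is, every monomial x_1^{e_1}⋯x_n^{e_n} occurring in ψ_n with nonzero coefficient satisfies Σ_i i·e_i ≤ n, and at least one such monomial attains Σ_i i·e_i = n. -/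
open scoped BigOperators

/-- The weighted degree `∑_i i·e_i` of a monomial (recall `X i` represents `x_{i+1}`). -/
def wdeg (d : ℕ →₀ ℕ) : ℕ := ∑ i ∈ d.support, (i + 1) * d i


open MvPolynomial

def mydeg (d : ℕ →₀ ℕ) : ℕ := ∑ i ∈ d.support, d i

lemma wdeg_def (d : ℕ →₀ ℕ) : wdeg d = d.sum fun i e => (i+1)*e := rfl
lemma mydeg_def (d : ℕ →₀ ℕ) : mydeg d = d.sum fun _ e => e := rfl

lemma wdeg_zero : wdeg 0 = 0 := rfl
lemma mydeg_zero : mydeg 0 = 0 := rfl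

lemma wdeg_add (a b : ℕ →₀ ℕ) : wdeg (a+b) = wdeg a + wdeg b := by
  simp only [wdeg_def]
  exact Finsupp.sum_add_index' (fun i => by ring) (fun i x y => by ring)

lemma mydeg_add (a b : ℕ →₀ ℕ) : mydeg (a+b) = mydeg a + mydeg b := by
  simp only [mydeg_def]
  exact Finsupp.sum_add_index' (fun i => rfl) (fun i x y => rfl)

lemma wdeg_single (i e : ℕ) : wdeg (Finsupp.single i e) = (i+1)*e := by
  simp [wdeg_def, Finsupp.sum_single_index]

lemma mydeg_single (i e : ℕ) : mydeg (Finsupp.single i e) = e := by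
  simp [mydeg_def, Finsupp.sum_single_index]

lemma wdeg_sum {α : Type*} (s : Finset α) (f : α → (ℕ →₀ ℕ)) :
    wdeg (∑ a ∈ s, f a) = ∑ a ∈ s, wdeg (f a) := by
  classical
  induction s using Finset.cons_induction with
  | empty => simp [wdeg_zero]
  | cons a s ha ih => rw [Finset.sum_cons, Finset.sum_cons, wdeg_add, ih]

lemma mydeg_sum {α : Type*} (s : Finset α) (f : α → (ℕ →₀ ℕ)) :
    mydeg (∑ a ∈ s, f a) = ∑ a ∈ s, mydeg (f a) := by
  classical
  induction s using Finset.cons_induction with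
  | empty => simp [mydeg_zero]
  | cons a s ha ih => rw [Finset.sum_cons, Finset.sum_cons, mydeg_add, ih]

/-- combined degree bounds -/
def Bdd (n k : ℕ) (p : MvPolynomial ℕ ℤ) : Prop :=
  ∀ d ∈ p.support, wdeg d ≤ n ∧ k ≤ mydeg d

lemma Bdd.mono {n n' k k' : ℕ} {p} (h : Bdd n k p) (hn : n ≤ n') (hk : k' ≤ k) :
    Bdd n' k' p := fun d hd => ⟨(h d hd).1.trans hn, hk.trans (h d hd).2⟩

lemma Bdd_zero (n k : ℕ) : Bdd n k (0 : MvPolynomial ℕ ℤ) := by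
  intro d hd; simp at hd

lemma Bdd_C (n : ℕ) (c : ℤ) : Bdd n 0 (C c : MvPolynomial ℕ ℤ) := by
  intro d hd
  rw [MvPolynomial.mem_support_iff, MvPolynomial.coeff_C] at hd
  by_cases h : (0 : ℕ →₀ ℕ) = d
  · subst h; simp [wdeg_zero, mydeg_zero]
  · simp [h] at hd

lemma Bdd_X (i : ℕ) : Bdd (i+1) 1 (X i : MvPolynomial ℕ ℤ) := by
  intro d hd
  rw [MvPolynomial.support_X, Finset.mem_singleton] at hd
  subst hd; simp [wdeg_single, mydeg_single]

lemma Bdd_mul {a b j k : ℕ} {p q : MvPolynomial ℕ ℤ} (hp : Bdd a j p) (hq : Bdd b k q) :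
    Bdd (a+b) (j+k) (p*q) := by
  intro d hd
  obtain ⟨u, hu, v, hv, rfl⟩ := Finset.mem_add.mp (MvPolynomial.support_mul p q hd)
  exact ⟨by rw [wdeg_add]; exact Nat.add_le_add (hp u hu).1 (hq v hv).1,
    by rw [mydeg_add]; exact Nat.add_le_add (hp u hu).2 (hq v hv).2⟩

lemma Bdd_pow {a j : ℕ} {p : MvPolynomial ℕ ℤ} (hp : Bdd a j p) (e : ℕ) :
    Bdd (e*a) (e*j) (p^e) := by
  induction e with
  | zero => simpa using (Bdd_C 0 1).mono (le_refl 0) (le_refl 0)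
  | succ e ih =>
      rw [pow_succ]
      exact (Bdd_mul ih hp).mono (le_of_eq (by ring)) (le_of_eq (by ring))

lemma Bdd_sum {α : Type*} {s : Finset α} {f : α → MvPolynomial ℕ ℤ} {n k : ℕ}
    (h : ∀ a ∈ s, Bdd n k (f a)) : Bdd n k (∑ a ∈ s, f a) := by
  classical
  intro d hd
  obtain ⟨a, ha, hda⟩ := Finset.mem_biUnion.mp (MvPolynomial.support_sum hd)
  exact h a ha d hda

lemma Bdd_prod {α : Type*} (s : Finset α) (f : α → MvPolynomial ℕ ℤ) (a b : α → ℕ)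
    (h : ∀ x ∈ s, Bdd (a x) (b x) (f x)) :
    Bdd (∑ x ∈ s, a x) (∑ x ∈ s, b x) (∏ x ∈ s, f x) := by
  classical
  induction s using Finset.cons_induction with
  | empty => simpa using Bdd_C 0 1
  | cons x s hx ih =>
      rw [Finset.prod_cons, Finset.sum_cons, Finset.sum_cons]
      exact Bdd_mul (h x (Finset.mem_cons_self x s)) (ih fun y hy => h y (Finset.mem_cons_of_mem hy))

lemma Bdd_aeval {g : ℕ → MvPolynomial ℕ ℤ} (hg : ∀ i, Bdd (i+1) 1 (g i))
    {p : MvPolynomial ℕ ℤ} {n k : ℕ} (hp : ∀ d ∈ p.support, wdeg d ≤ n ∧ k ≤ mydeg d) :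
    Bdd n k (aeval g p) := by
  classical
  conv_lhs => skip
  rw [show (aeval g p : MvPolynomial ℕ ℤ) = ∑ u ∈ p.support, aeval g (monomial u (coeff u p)) by
    rw [← map_sum]; exact congrArg _ p.as_sum]
  apply Bdd_sum
  intro u hu
  rw [aeval_monomial]
  have h1 : Bdd 0 0 ((algebraMap ℤ (MvPolynomial ℕ ℤ)) (coeff u p)) := Bdd_C 0 (coeff u p)
  have h2 : Bdd (wdeg u) (mydeg u) (u.prod fun i e => g i ^ e) := by
    rw [Finsupp.prod, wdeg_def, Finsupp.sum, mydeg_def, Finsupp.sum]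
    apply Bdd_prod u.support _ (fun i => (i+1) * u i) (fun i => u i)
    intro i hi
    exact (Bdd_pow (hg i) (u i)).mono (le_of_eq (by ring)) (le_of_eq (by ring))
  have := Bdd_mul h1 h2
  simp only [Nat.zero_add] at this
  exact this.mono (hp u hu).1 (hp u hu).2

lemma prod_monomial_one {α : Type*} (s : Finset α) (f : α → (ℕ →₀ ℕ)) :
    (∏ a ∈ s, (monomial (f a) (1:ℤ) : MvPolynomial ℕ ℤ)) = monomial (∑ a ∈ s, f a) 1 := by
  induction s using Finset.cons_induction with
  | empty => simp
  | cons a s ha ih => rw [Finset.prod_cons, Finset.sum_cons, ih, monomial_mul, one_mul]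

lemma prod_X_pow {t : ℕ} (j : Fin t → ℕ) :
    (∏ ν : Fin t, (X (ν:ℕ) : MvPolynomial ℕ ℤ) ^ (j ν)) =
      monomial (∑ ν : Fin t, Finsupp.single (ν:ℕ) (j ν)) 1 := by
  rw [← prod_monomial_one]
  exact Finset.prod_congr rfl fun ν _ => MvPolynomial.X_pow_eq_monomial

lemma bellPartial_supp (n k : ℕ) :
    ∀ d ∈ (bellPartial n k).support, wdeg d = n ∧ mydeg d = k := by
  classical
  intro d hd
  rw [bellPartial] at hd
  obtain ⟨j, hj, hdj⟩ := Finset.mem_biUnion.mp (MvPolynomial.support_sum hd)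
  split_ifs at hdj with hcond
  · rw [_root_.prod_X_pow, MvPolynomial.C_mul_monomial, mul_one] at hdj
    have hds := MvPolynomial.support_monomial_subset hdj
    rw [Finset.mem_singleton] at hds
    subst hds
    constructor
    · rw [wdeg_sum,
        Finset.sum_congr rfl fun (ν : Fin (n-k+1)) _ => wdeg_single (ν:ℕ) (j ν : ℕ)]
      exact hcond.1
    · rw [mydeg_sum,
        Finset.sum_congr rfl fun (ν : Fin (n-k+1)) _ => mydeg_single (ν:ℕ) (j ν : ℕ)]
      exact hcond.2
  · simp at hdj

lemma aeval_diag_monomial (c : ℕ → ℤ) (u : ℕ →₀ ℕ) (a : ℤ) :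
    aeval (fun i => (C (c i) * X i : MvPolynomial ℕ ℤ)) (monomial u a) =
      monomial u (a * ∏ i ∈ u.support, c i ^ u i) := by
  rw [aeval_monomial]
  have h1 : (u.prod fun i e => (C (c i) * X i : MvPolynomial ℕ ℤ) ^ e)
      = C (∏ i ∈ u.support, c i ^ u i) * u.prod fun i e => (X i : MvPolynomial ℕ ℤ) ^ e := by
    rw [Finsupp.prod, Finsupp.prod]
    calc (∏ i ∈ u.support, (C (c i) * X i : MvPolynomial ℕ ℤ) ^ u i)
        = ∏ i ∈ u.support, (C (c i ^ u i) * (X i : MvPolynomial ℕ ℤ) ^ u i) := by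
          refine Finset.prod_congr rfl fun i _ => ?_
          rw [mul_pow, ← map_pow]
      _ = (∏ i ∈ u.support, (C (c i ^ u i) : MvPolynomial ℕ ℤ)) *
            ∏ i ∈ u.support, (X i : MvPolynomial ℕ ℤ) ^ u i := Finset.prod_mul_distrib
      _ = _ := by rw [← map_prod]
  rw [h1, MvPolynomial.algebraMap_eq, ← mul_assoc, ← MvPolynomial.C_mul,
    ← MvPolynomial.monomial_eq]

lemma coeff_aeval_diag (c : ℕ → ℤ) (p : MvPolynomial ℕ ℤ) (d : ℕ →₀ ℕ) :
    coeff d (aeval (fun i => (C (c i) * X i : MvPolynomial ℕ ℤ)) p) =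
      (∏ i ∈ d.support, c i ^ d i) * coeff d p := by
  classical
  conv_lhs => rw [p.as_sum, map_sum]
  rw [coeff_sum]
  simp only [aeval_diag_monomial, coeff_monomial]
  rw [Finset.sum_ite_eq' p.support d (fun u => coeff u p * ∏ i ∈ u.support, c i ^ u i)]
  by_cases hd : d ∈ p.support
  · simp [hd, mul_comm]
  · simp [hd, MvPolynomial.notMem_support_iff.mp hd]

lemma coeff_bellPartial_one (m : ℕ) :
    coeff (Finsupp.single m 1) (bellPartial (m+1) 1) = 1 := by
  classical
  rw [bellPartial, coeff_sum]
  set ν₀ : Fin (m + 1 - 1 + 1) := ⟨m, by omega⟩ with hν₀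
  set jstar : Fin (m + 1 - 1 + 1) → Fin (m + 1 + 1) :=
    fun ν => if ν = ν₀ then 1 else 0 with hjstar
  have hval : ∀ ν, ((jstar ν : ℕ)) = if ν = ν₀ then 1 else 0 := by
    intro ν
    by_cases h : ν = ν₀ <;> simp [hjstar, h]
  rw [Finset.sum_eq_single jstar]
  · -- value at jstar
    have hcond : (∑ ν : Fin (m + 1 - 1 + 1), ((ν : ℕ) + 1) * (jstar ν : ℕ)) = m + 1 ∧
        (∑ ν : Fin (m + 1 - 1 + 1), (jstar ν : ℕ)) = 1 := by
      constructor
      · have e : ∀ ν : Fin (m + 1 - 1 + 1),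
            ((ν : ℕ) + 1) * (jstar ν : ℕ) = if ν = ν₀ then (ν : ℕ) + 1 else 0 := by
          intro ν; rw [hval ν, mul_ite, mul_one, mul_zero]
        rw [Finset.sum_congr rfl fun ν _ => e ν,
          Finset.sum_ite_eq' Finset.univ ν₀ (fun ν => (ν : ℕ) + 1),
          if_pos (Finset.mem_univ _)]
      · rw [Finset.sum_congr rfl fun ν _ => hval ν,
          Finset.sum_ite_eq' Finset.univ ν₀ (fun _ => 1),
          if_pos (Finset.mem_univ _)]
    rw [if_pos hcond, _root_.prod_X_pow]
    have hD : (∑ ν : Fin (m + 1 - 1 + 1), Finsupp.single (ν : ℕ) (jstar ν : ℕ))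
        = Finsupp.single m 1 := by
      have e : ∀ ν : Fin (m + 1 - 1 + 1), Finsupp.single (ν : ℕ) ((jstar ν : ℕ))
          = if ν = ν₀ then Finsupp.single m 1 else 0 := by
        intro ν
        rw [hval ν]
        by_cases h : ν = ν₀
        · rw [if_pos h, if_pos h, h]
        · rw [if_neg h, if_neg h, Finsupp.single_zero]
      rw [Finset.sum_congr rfl fun ν _ => e ν,
        Finset.sum_ite_eq' Finset.univ ν₀ (fun _ => Finsupp.single m 1),
        if_pos (Finset.mem_univ _)]
    have hprod : (∏ ν : Fin (m + 1 - 1 + 1),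
        ((jstar ν : ℕ).factorial * ((ν : ℕ) + 1).factorial ^ (jstar ν : ℕ)))
        = (m+1).factorial := by
      have e : ∀ ν : Fin (m + 1 - 1 + 1),
          ((jstar ν : ℕ).factorial * ((ν : ℕ) + 1).factorial ^ (jstar ν : ℕ))
          = if ν = ν₀ then (m+1).factorial else 1 := by
        intro ν
        rw [hval ν]
        by_cases h : ν = ν₀
        · rw [if_pos h, if_pos h, h]
          norm_num [Nat.factorial, hν₀]
        · rw [if_neg h, if_neg h]
          norm_num [Nat.factorial]
      rw [Finset.prod_congr rfl fun ν _ => e ν,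
        Finset.prod_ite_eq' Finset.univ ν₀ (fun _ => (m+1).factorial),
        if_pos (Finset.mem_univ _)]
    rw [hD, hprod, Nat.div_self (Nat.factorial_pos _), MvPolynomial.C_mul_monomial,
      mul_one, coeff_monomial, if_pos rfl]
    norm_num
  · -- other j give zero
    intro j _ hne
    have hDne : (∑ ν : Fin (m + 1 - 1 + 1), Finsupp.single (ν : ℕ) (j ν : ℕ))
        ≠ Finsupp.single m 1 := by
      intro hD
      apply hne
      funext ν
      have happ : (j ν : ℕ) = (Finsupp.single m 1 : ℕ →₀ ℕ) (ν : ℕ) := by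
        rw [← hD, Finsupp.finset_sum_apply]
        have e : ∀ μ : Fin (m + 1 - 1 + 1),
            (Finsupp.single (μ : ℕ) ((j μ : ℕ)) : ℕ →₀ ℕ) (ν : ℕ)
            = if μ = ν then (j μ : ℕ) else 0 := by
          intro μ
          rw [Finsupp.single_apply]
          by_cases h : μ = ν
          · rw [if_pos h, if_pos (congrArg Fin.val h)]
          · rw [if_neg h, if_neg (fun hc => h (Fin.ext hc))]
        rw [Finset.sum_congr rfl fun μ _ => e μ,
          Finset.sum_ite_eq' Finset.univ ν (fun μ => (j μ : ℕ)),
          if_pos (Finset.mem_univ _)]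
      have h2 : (j ν : ℕ) = if ν = ν₀ then 1 else 0 := by
        rw [happ, Finsupp.single_apply]
        by_cases h : ν = ν₀
        · rw [if_pos h, if_pos (by rw [h])]
        · rw [if_neg h, if_neg (fun hc => h (Fin.ext hc.symm))]
      apply Fin.ext
      rw [h2, hval]
    split_ifs with hcond
    · rw [_root_.prod_X_pow, MvPolynomial.C_mul_monomial, mul_one, coeff_monomial,
        if_neg hDne]
    · exact MvPolynomial.coeff_zero _
  · intro h; exact absurd (Finset.mem_univ jstar) h

lemma Bdd_add {n k : ℕ} {p q : MvPolynomial ℕ ℤ} (hp : Bdd n k p) (hq : Bdd n k q) :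
    Bdd n k (p + q) := by
  intro d hd
  rcases Finset.mem_union.mp (MvPolynomial.support_add hd) with h | h
  · exact hp d h
  · exact hq d h

lemma coeff_bellComplete_one (m : ℕ) :
    coeff (Finsupp.single m 1) (bellComplete (m+1)) = 1 := by
  classical
  rw [bellComplete, coeff_sum, Finset.sum_eq_single 1]
  · exact coeff_bellPartial_one m
  · intro k hk hk1
    by_contra h
    have hmem : Finsupp.single m 1 ∈ (bellPartial (m+1) k).support :=
      MvPolynomial.mem_support_iff.mpr h
    have h2 := (bellPartial_supp (m+1) k _ hmem).2
    rw [mydeg_single] at h2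
    exact hk1 h2.symm
  · intro h; exact absurd (Finset.mem_Icc.mpr ⟨le_refl 1, by omega⟩) h

lemma coeff_sigmaStar (m : ℕ) :
    coeff (Finsupp.single m 1) (sigmaStar (m+1)) = (-1)^m * (m.factorial : ℤ) := by
  rw [sigmaStar]
  have h1 : ((-1 : MvPolynomial ℕ ℤ))^(m+1) = C ((-1)^(m+1)) := by
    rw [map_pow, map_neg, map_one]
  rw [h1, MvPolynomial.coeff_C_mul,
    coeff_aeval_diag (fun i => -(i.factorial : ℤ)), coeff_bellComplete_one,
    Finsupp.support_single_ne_zero m one_ne_zero]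
  simp only [Finset.prod_singleton, Finsupp.single_eq_same, pow_one, mul_one, pow_succ]
  ring

lemma coeff_single_PsiOf (f : ℕ → MvPolynomial ℕ ℤ) (n m : ℕ)
    (hf : ∀ i, Bdd (i+1) 1 (f (i+1))) :
    coeff (Finsupp.single m 1) (PsiOf f n) = 0 := by
  classical
  rw [PsiOf, coeff_sum]
  apply Finset.sum_eq_zero
  intro ν hν
  rw [coeff_sum]
  apply Finset.sum_eq_zero
  intro k hk
  rw [MvPolynomial.coeff_C_mul]
  have hb : Bdd (n - k) ν (aeval (fun i => f (i+1)) (bellPartial (n-k) ν)) :=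
    Bdd_aeval hf (fun d hd => by
      have h := bellPartial_supp (n-k) ν d hd
      exact ⟨h.1.le, h.2.ge⟩)
  have h2 : (2:ℕ) ≤ ν := (Finset.mem_Icc.mp hν).1
  have hz : coeff (Finsupp.single m 1) (aeval (fun i => f (i+1)) (bellPartial (n-k) ν)) = 0 := by
    by_contra h
    have h3 := (hb _ (MvPolynomial.mem_support_iff.mpr h)).2
    rw [mydeg_single] at h3
    omega
  rw [hz, mul_zero]

lemma psi_zero : psi 0 = 0 := by
  rw [psi, Nat.strongRecOn_eq]
  simp

lemma psi_eq (n : ℕ) (hn : n ≠ 0) :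
    psi n = (n:ℤ) • psi (n-1) + sigmaStar n +
      PsiOf (fun mm => if mm < n then psi mm else 0) n := by
  conv_lhs => rw [psi, Nat.strongRecOn_eq]
  rw [dif_neg hn]
  simp only [dite_eq_ite]
  rfl

lemma psi_bdd (n : ℕ) : Bdd n 1 (psi n) := by
  induction n using Nat.strongRecOn with
  | ind n ih =>
    rcases Nat.eq_zero_or_pos n with rfl | hn
    · rw [psi_zero]; exact Bdd_zero 0 1
    · rw [psi_eq n (by omega)]
      have hsmul : Bdd n 1 ((n:ℤ) • psi (n-1)) := by
        intro d hd
        have hd' : d ∈ (psi (n-1)).support := by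
          rw [MvPolynomial.mem_support_iff] at hd ⊢
          intro h0; apply hd; rw [MvPolynomial.coeff_smul, h0, smul_zero]
        exact (ih (n-1) (by omega) d hd').imp (fun h => h.trans (by omega)) id
      have hsig : Bdd n 1 (sigmaStar n) := by
        rw [sigmaStar]
        have h1 : ((-1 : MvPolynomial ℕ ℤ))^n = C ((-1)^n) := by
          rw [map_pow, map_neg, map_one]
        rw [h1]
        have hbc : ∀ d ∈ (bellComplete n).support, wdeg d ≤ n ∧ 1 ≤ mydeg d := by
          intro d hd
          rw [bellComplete] at hd
          obtain ⟨kk, hkk, hdk⟩ := Finset.mem_biUnion.mp (MvPolynomial.support_sum hd)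
          have h := bellPartial_supp n kk d hdk
          exact ⟨h.1.le, by rw [h.2]; exact (Finset.mem_Icc.mp hkk).1⟩
        have := Bdd_mul (Bdd_C 0 ((-1)^n))
          (Bdd_aeval (fun i => (Bdd_mul (Bdd_C 0 (-(i.factorial:ℤ))) (Bdd_X i)).mono
            (by omega) (by omega)) hbc)
        simpa using this
      have hPsi : Bdd n 1 (PsiOf (fun mm => if mm < n then psi mm else 0) n) := by
        rw [PsiOf]
        apply Bdd_sum; intro ν hν
        apply Bdd_sum; intro k hk
        have h2 := Finset.mem_Icc.mp hν
        refine (Bdd_mul (Bdd_C 0 _)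
          (Bdd_aeval (p := bellPartial (n-k) ν) (n := n-k) (k := ν) ?_
            (fun d hd => ?_))).mono ?_ ?_
        · intro i
          by_cases hi : i + 1 < n
          · simp only [if_pos hi]; exact ih (i+1) hi
          · simp only [if_neg hi]; exact Bdd_zero _ _
        · have h := bellPartial_supp (n-k) ν d hd; exact ⟨h.1.le, h.2.ge⟩
        · omega
        · omega
      exact Bdd_add (Bdd_add hsmul hsig) hPsi

lemma coeff_psi_succ (m : ℕ) :
    coeff (Finsupp.single m 1) (psi (m+1)) = (-1)^m * (m.factorial:ℤ) := by
  rw [psi_eq (m+1) (by omega), MvPolynomial.coeff_add, MvPolynomial.coeff_add,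
    MvPolynomial.coeff_smul]
  have h1 : coeff (Finsupp.single m 1) (psi (m+1-1)) = 0 := by
    by_contra h
    have h2 := (psi_bdd (m+1-1) _ (MvPolynomial.mem_support_iff.mpr h)).1
    rw [wdeg_single] at h2; omega
  have h3 : coeff (Finsupp.single m 1)
      (PsiOf (fun mm => if mm < m+1 then psi mm else 0) (m+1)) = 0 := by
    apply coeff_single_PsiOf
    intro i
    by_cases hi : i + 1 < m + 1
    · simp only [if_pos hi]; exact psi_bdd (i+1)
    · simp only [if_neg hi]; exact Bdd_zero _ _
  rw [h1, h3, coeff_sigmaStar, smul_zero, zero_add, add_zero]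

theorem stmt14 (n : ℕ) (hn : 1 ≤ n) :
    (∀ d ∈ (psi n).support, wdeg d ≤ n) ∧ ∃ d ∈ (psi n).support, wdeg d = n := by
  obtain ⟨m, rfl⟩ : ∃ m, n = m + 1 := ⟨n-1, by omega⟩
  constructor
  · intro d hd; exact (psi_bdd (m+1) d hd).1
  · refine ⟨Finsupp.single m 1, ?_, ?_⟩
    · rw [MvPolynomial.mem_support_iff, coeff_psi_succ]
      exact mul_ne_zero (pow_ne_zero _ (by norm_num))
        (Int.natCast_ne_zero.mpr m.factorial_ne_zero)
    · rw [wdeg_single, mul_one]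
end

section
/- Let n ≥ k ≥ 1. In the polynomial ring ℚ[y_1,…,y_n], the k-th elementary symmetric polynomial e_k and the power sums π_j = y_1^j + ⋯ + y_n^j satisfy k!·e_k(y_1,…,y_n) = (-1)^k·B_k(-0!·π_1, -1!·π_2, …, -(k-1)!·π_k), i.e. k!·e_k equals σ̂*_k evaluated at the power sums π_1,…,π_k. -/
open scoped BigOperators

open Multiset Finset MvPolynomial

namespace Stmt19Aux


lemma card_le_sum_of_pos {s : Multiset ℕ} (h : ∀ i ∈ s, 0 < i) :
    Multiset.card s ≤ s.sum := by
  induction s using Multiset.induction_on with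
  | empty => simp
  | cons a s ih =>
    simp only [Multiset.card_cons, Multiset.sum_cons]
    have ha : 0 < a := h a (mem_cons_self a s)
    have := ih (fun i hi => h i (mem_cons_of_mem hi))
    omega

lemma card_msum {ι : Type*} (s : Finset ι) (f : ι → Multiset ℕ) :
    Multiset.card (∑ i ∈ s, f i) = ∑ i ∈ s, Multiset.card (f i) := by
  classical
  induction s using Finset.cons_induction with
  | empty => simp
  | cons a s ha ih => simp [Finset.sum_cons, ih]

/-- sum of `w * count w` over the support is the total sum -/
lemma sum_mul_count (s : Multiset ℕ) :
    ∑ w ∈ s.toFinset, w * s.count w = s.sum := by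
  rw [Finset.sum_multiset_count (s := s)]
  exact Finset.sum_congr rfl fun w _ => by rw [smul_eq_mul, mul_comm]

/-- the denominator in `Multiset.bell_eq` -/
def D (s : Multiset ℕ) : ℕ :=
  (Multiset.map (fun j => j.factorial) s).prod *
    ∏ j ∈ s.toFinset.erase 0, (Multiset.count j s).factorial

lemma D_pos (s : Multiset ℕ) : 0 < D s := by
  unfold D
  apply Nat.mul_pos
  · apply Multiset.prod_pos
    intro x hx
    obtain ⟨a, _, rfl⟩ := Multiset.mem_map.1 hx
    exact Nat.factorial_pos _
  · exact Finset.prod_pos fun _ _ => Nat.factorial_pos _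

lemma bell_mul_D (s : Multiset ℕ) : s.bell * D s = s.sum.factorial := by
  rw [D, ← mul_assoc]; exact Multiset.bell_mul_eq s

lemma count_prod_eq {s : Multiset ℕ} (h0 : (0:ℕ) ∉ s) {T : Finset ℕ}
    (hsub : s.toFinset ⊆ T) :
    ∏ j ∈ s.toFinset.erase 0, (Multiset.count j s).factorial =
      ∏ j ∈ T, (Multiset.count j s).factorial := by
  rw [Finset.erase_eq_of_notMem (by simpa using h0)]
  refine Finset.prod_subset hsub fun x _ hx => ?_
  rw [Multiset.count_eq_zero_of_notMem (by simpa using hx), Nat.factorial_zero]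

lemma bell_erase_term {m w : ℕ} (s : Multiset ℕ) (hpos : ∀ i ∈ s, 0 < i)
    (hsum : s.sum = m) (hw : w ∈ s) :
    ((m-1).choose (w-1) * Multiset.bell (s.erase w)) * D s
      = (m-1).factorial * (w * s.count w) := by
  have hw1 : 0 < w := hpos w hw
  have hwm : w ≤ m := hsum ▸ Multiset.le_sum_of_mem hw
  have hcons : w ::ₘ s.erase w = s := Multiset.cons_erase hw
  have hesum : (s.erase w).sum = m - w := by
    have : (w ::ₘ s.erase w).sum = m := by rw [hcons, hsum]
    rw [Multiset.sum_cons] at this; omega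
  have h0s : (0:ℕ) ∉ s := fun h => absurd (hpos 0 h) (lt_irrefl 0)
  have h0e : (0:ℕ) ∉ s.erase w := fun h => h0s (Multiset.mem_of_mem_erase h)
  have hsube : (s.erase w).toFinset ⊆ s.toFinset :=
    Multiset.toFinset_subset.2 (Multiset.subset_of_le (Multiset.erase_le w s))
  have hwt : w ∈ s.toFinset := Multiset.mem_toFinset.2 hw
  -- D₁ factorization
  have hD1 : (Multiset.map (fun j => j.factorial) s).prod
      = w.factorial * (Multiset.map (fun j => j.factorial) (s.erase w)).prod := by
    conv_lhs => rw [← hcons]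
    rw [Multiset.map_cons, Multiset.prod_cons]
  -- D₂ factorization
  have hcnt : 0 < s.count w := Multiset.count_pos.2 hw
  have hD2 : ∏ j ∈ s.toFinset.erase 0, (Multiset.count j s).factorial
      = s.count w * ∏ j ∈ (s.erase w).toFinset.erase 0, (Multiset.count j (s.erase w)).factorial := by
    rw [count_prod_eq h0s (Finset.Subset.refl _), count_prod_eq h0e hsube,
      ← Finset.mul_prod_erase _ _ hwt, ← Finset.mul_prod_erase _ (fun j => (Multiset.count j (s.erase w)).factorial) hwt]
    have : ∏ j ∈ s.toFinset.erase w, (Multiset.count j (s.erase w)).factorial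
        = ∏ j ∈ s.toFinset.erase w, (Multiset.count j s).factorial := by
      refine Finset.prod_congr rfl fun x hx => ?_
      rw [Multiset.count_erase_of_ne (Finset.ne_of_mem_erase hx)]
    rw [this, Multiset.count_erase_self, ← mul_assoc]
    congr 1
    obtain ⟨c, hc⟩ : ∃ c, s.count w = c + 1 := ⟨s.count w - 1, by omega⟩
    rw [hc]
    simp [Nat.factorial_succ]
  have hbe : Multiset.bell (s.erase w) * D (s.erase w) = (m - w).factorial := by
    rw [bell_mul_D, hesum]
  calc ((m-1).choose (w-1) * Multiset.bell (s.erase w)) * D s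
      = (m-1).choose (w-1) * (w.factorial * s.count w) *
          (Multiset.bell (s.erase w) * D (s.erase w)) := by
        unfold D; rw [hD1, hD2]; ring
    _ = (m-1).choose (w-1) * (w.factorial * s.count w) * (m-w).factorial := by rw [hbe]
    _ = ((m-1).choose (w-1) * (w-1).factorial * ((m-1)-(w-1)).factorial) * (w * s.count w) := by
        have hwf : w.factorial = w * (w-1).factorial := by
          obtain ⟨v, rfl⟩ : ∃ v, w = v + 1 := ⟨w - 1, by omega⟩
          simp [Nat.factorial_succ]
        have : (m-1)-(w-1) = m - w := by omega
        rw [hwf, this]; ring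
    _ = (m-1).factorial * (w * s.count w) := by
        rw [Nat.choose_mul_factorial_mul_factorial (by omega : w - 1 ≤ m - 1)]

lemma bell_erase {m : ℕ} (hm : 1 ≤ m) (s : Multiset ℕ) (hpos : ∀ i ∈ s, 0 < i)
    (hsum : s.sum = m) :
    Multiset.bell s = ∑ w ∈ s.toFinset, (m-1).choose (w-1) * Multiset.bell (s.erase w) := by
  refine Nat.eq_of_mul_eq_mul_right (D_pos s) ?_
  rw [bell_mul_D, hsum, Finset.sum_mul]
  have : ∀ w ∈ s.toFinset, ((m-1).choose (w-1) * Multiset.bell (s.erase w)) * D s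
      = (m-1).factorial * (w * s.count w) := fun w hw =>
    bell_erase_term s hpos hsum (Multiset.mem_toFinset.1 hw)
  rw [Finset.sum_congr rfl this, ← Finset.mul_sum, sum_mul_count, hsum]
  obtain ⟨m', rfl⟩ : ∃ m', m = m' + 1 := ⟨m - 1, by omega⟩
  simp [Nat.factorial_succ, mul_comm]



lemma prod_map_erase {A : Type*} [CommMonoid A] (f : ℕ → A) {s : Multiset ℕ} {w : ℕ}
    (hw : w ∈ s) : (s.map f).prod = f w * ((s.erase w).map f).prod := by
  conv_lhs => rw [← Multiset.cons_erase hw]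
  rw [Multiset.map_cons, Multiset.prod_cons]

def erasePart {m w : ℕ} (P : Nat.Partition m) (hP : w ∈ P.parts) : Nat.Partition (m - w) where
  parts := P.parts.erase w
  parts_pos := fun hi => P.parts_pos (Multiset.mem_of_mem_erase hi)
  parts_sum := by
    have h1 : w ::ₘ P.parts.erase w = P.parts := Multiset.cons_erase hP
    have h2 : (w ::ₘ P.parts.erase w).sum = m := by rw [h1, P.parts_sum]
    rw [Multiset.sum_cons] at h2; omega

def consPart {m w : ℕ} (hw1 : 1 ≤ w) (hwm : w ≤ m) (Q : Nat.Partition (m - w)) :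
    Nat.Partition m where
  parts := w ::ₘ Q.parts
  parts_pos := fun hi => by
    rcases Multiset.mem_cons.1 hi with h | h
    · subst h; omega
    · exact Q.parts_pos h
  parts_sum := by rw [Multiset.sum_cons, Q.parts_sum]; omega

variable {A : Type*} [CommRing A]

noncomputable def bar (f : ℕ → A) (m : ℕ) : A :=
  ∑ P : m.Partition, (Multiset.bell P.parts : A) * (P.parts.map f).prod

lemma bar_zero (f : ℕ → A) : bar f 0 = 1 := by
  rw [bar, Finset.sum_eq_single (default : Nat.Partition 0)]
  · simp [Multiset.bell_zero]
  · intro b _ hb; exact absurd (Subsingleton.elim b default) hb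
  · intro h; exact absurd (Finset.mem_univ _) h

lemma parts_mem_Icc {m : ℕ} (P : Nat.Partition m) {w : ℕ} (hw : w ∈ P.parts) :
    w ∈ Finset.Icc 1 m := by
  rw [Finset.mem_Icc]
  exact ⟨P.parts_pos hw, P.parts_sum ▸ Multiset.le_sum_of_mem hw⟩

lemma bar_rec (f : ℕ → A) {m : ℕ} (hm : 1 ≤ m) :
    bar f m = ∑ w ∈ Finset.Icc 1 m,
      ((m-1).choose (w-1) : A) * f w * bar f (m - w) := by
  classical
  rw [bar]
  have step1 : ∀ P : Nat.Partition m,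
      (Multiset.bell P.parts : A) * (P.parts.map f).prod
        = ∑ w ∈ Finset.Icc 1 m, (if w ∈ P.parts then
            ((m-1).choose (w-1) * Multiset.bell (P.parts.erase w) : ℕ) *
              (f w * ((P.parts.erase w).map f).prod) else 0) := by
    intro P
    have hfil : (Finset.Icc 1 m).filter (fun w => w ∈ P.parts) = P.parts.toFinset := by
      ext w
      simp only [Finset.mem_filter, Multiset.mem_toFinset]
      exact ⟨fun h => h.2, fun h => ⟨parts_mem_Icc P h, h⟩⟩
    rw [← Finset.sum_filter, hfil,
      bell_erase hm P.parts (fun i hi => P.parts_pos hi) P.parts_sum,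
      Nat.cast_sum, Finset.sum_mul]
    refine Finset.sum_congr rfl fun w hw => ?_
    rw [prod_map_erase f (Multiset.mem_toFinset.1 hw)]
  rw [Finset.sum_congr rfl fun P _ => step1 P, Finset.sum_comm]
  refine Finset.sum_congr rfl fun w hw => ?_
  obtain ⟨hw1, hwm⟩ := Finset.mem_Icc.1 hw
  rw [← Finset.sum_filter, bar, Finset.mul_sum]
  refine Finset.sum_bij' (i := fun P hP => erasePart P (Finset.mem_filter.1 hP).2)
    (j := fun Q _ => consPart hw1 hwm Q) (fun P hP => Finset.mem_univ _)
    (fun Q hQ => Finset.mem_filter.2 ⟨Finset.mem_univ _, Multiset.mem_cons_self _ _⟩)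
    ?_ ?_ ?_
  · intro P hP
    exact Nat.Partition.ext (Multiset.cons_erase (Finset.mem_filter.1 hP).2)
  · intro Q hQ
    exact Nat.Partition.ext (Multiset.erase_cons_head _ _)
  · intro P hP
    simp only [erasePart]
    push_cast
    ring


def partsOf {t : ℕ} (j : Fin t → ℕ) : Multiset ℕ :=
  ∑ ν : Fin t, Multiset.replicate (j ν) ((ν : ℕ) + 1)

lemma count_partsOf {t : ℕ} (j : Fin t → ℕ) (ν₀ : Fin t) :
    (partsOf j).count ((ν₀:ℕ)+1) = j ν₀ := by
  rw [partsOf, Multiset.count_sum', Finset.sum_eq_single ν₀]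
  · rw [Multiset.count_replicate]; simp
  · intro ν _ hne
    rw [Multiset.count_replicate, if_neg fun h => hne (Fin.ext (by omega))]
  · simp

lemma mem_partsOf {t : ℕ} {j : Fin t → ℕ} {w : ℕ} (hw : w ∈ partsOf j) :
    1 ≤ w ∧ w ≤ t := by
  rw [partsOf, Multiset.mem_sum] at hw
  obtain ⟨ν, -, hν⟩ := hw
  have h := Multiset.eq_of_mem_replicate hν
  have := ν.isLt
  omega

lemma sum_partsOf {t : ℕ} (j : Fin t → ℕ) :
    (partsOf j).sum = ∑ ν : Fin t, ((ν:ℕ)+1) * j ν := by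
  rw [partsOf, Multiset.sum_sum]
  exact Finset.sum_congr rfl fun ν _ => by
    rw [Multiset.sum_replicate, smul_eq_mul, mul_comm]

lemma card_partsOf {t : ℕ} (j : Fin t → ℕ) :
    Multiset.card (partsOf j) = ∑ ν : Fin t, j ν := by
  rw [partsOf, card_msum]; simp

lemma prod_fin_count {M : Type*} [CommMonoid M] {t : ℕ} (s : Multiset ℕ)
    (hb : ∀ w ∈ s, 1 ≤ w ∧ w ≤ t) (g : ℕ → ℕ → M) (hg : ∀ w, g w 0 = 1) :
    ∏ ν : Fin t, g ((ν:ℕ)+1) (s.count ((ν:ℕ)+1)) = ∏ w ∈ s.toFinset, g w (s.count w) := by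
  rw [Fin.prod_univ_eq_prod_range (fun ν => g (ν+1) (s.count (ν+1))) t]
  have h1 : ∏ w ∈ (Finset.range t).image (· + 1), g w (s.count w)
      = ∏ ν ∈ Finset.range t, g (ν+1) (s.count (ν+1)) :=
    Finset.prod_image (fun x _ y _ h => by omega)
  have himg : (Finset.range t).image (· + 1) = Finset.Icc 1 t := by
    ext w
    simp only [Finset.mem_image, Finset.mem_range, Finset.mem_Icc]
    constructor
    · rintro ⟨a, ha, rfl⟩; omega
    · rintro ⟨hh1, hh2⟩; exact ⟨w - 1, by omega, by omega⟩
  rw [← h1, himg]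
  refine (Finset.prod_subset
    (fun w hw => Finset.mem_Icc.2 (hb w (Multiset.mem_toFinset.1 hw))) ?_).symm
  intro x _ hx
  rw [Multiset.count_eq_zero_of_notMem (fun h => hx (Multiset.mem_toFinset.2 h)), hg]

lemma sum_fin_count {t : ℕ} (s : Multiset ℕ)
    (hb : ∀ w ∈ s, 1 ≤ w ∧ w ≤ t) (g : ℕ → ℕ → ℕ) (hg : ∀ w, g w 0 = 0) :
    ∑ ν : Fin t, g ((ν:ℕ)+1) (s.count ((ν:ℕ)+1)) = ∑ w ∈ s.toFinset, g w (s.count w) := by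
  rw [Fin.sum_univ_eq_sum_range (fun ν => g (ν+1) (s.count (ν+1))) t]
  have h1 : ∑ w ∈ (Finset.range t).image (· + 1), g w (s.count w)
      = ∑ ν ∈ Finset.range t, g (ν+1) (s.count (ν+1)) :=
    Finset.sum_image (fun x _ y _ h => by omega)
  have himg : (Finset.range t).image (· + 1) = Finset.Icc 1 t := by
    ext w
    simp only [Finset.mem_image, Finset.mem_range, Finset.mem_Icc]
    constructor
    · rintro ⟨a, ha, rfl⟩; omega
    · rintro ⟨hh1, hh2⟩; exact ⟨w - 1, by omega, by omega⟩
  rw [← h1, himg]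
  refine (Finset.sum_subset
    (fun w hw => Finset.mem_Icc.2 (hb w (Multiset.mem_toFinset.1 hw))) ?_).symm
  intro x _ hx
  rw [Multiset.count_eq_zero_of_notMem (fun h => hx (Multiset.mem_toFinset.2 h)), hg]

lemma part_le {m κ w : ℕ} (P : Nat.Partition m) (hcard : Multiset.card P.parts = κ)
    (hw : w ∈ P.parts) : 1 ≤ w ∧ w ≤ m - κ + 1 := by
  have hw1 : 0 < w := P.parts_pos hw
  have hcons : w ::ₘ P.parts.erase w = P.parts := Multiset.cons_erase hw
  have hsum : w + (P.parts.erase w).sum = m := by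
    rw [← Multiset.sum_cons, hcons, P.parts_sum]
  have hce : Multiset.card (P.parts.erase w) = κ - 1 := by
    rw [Multiset.card_erase_of_mem hw, hcard]; rfl
  have hle : Multiset.card (P.parts.erase w) ≤ (P.parts.erase w).sum :=
    card_le_sum_of_pos (fun i hi => P.parts_pos (Multiset.mem_of_mem_erase hi))
  have hκ1 : 1 ≤ κ := by
    rw [← hcard]
    exact Multiset.card_pos.2 (fun h => by simp [h] at hw)
  omega

def toPartition {k κ : ℕ} (j : Fin (k - κ + 1) → Fin (k+1))
    (hsum : ∑ ν : Fin (k - κ + 1), ((ν:ℕ)+1) * (j ν : ℕ) = k) : Nat.Partition k where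
  parts := partsOf (fun ν => (j ν : ℕ))
  parts_pos := fun hi => (mem_partsOf hi).1
  parts_sum := by rw [sum_partsOf]; exact hsum

def toTuple {k : ℕ} (t : ℕ) (P : Nat.Partition k) : Fin t → Fin (k+1) :=
  fun ν => ⟨P.parts.count ((ν:ℕ)+1),
    Nat.lt_succ_of_le ((Multiset.count_le_card _ _).trans
      ((card_le_sum_of_pos fun i hi => P.parts_pos hi).trans P.parts_sum.le))⟩

lemma bellPartial_eq {k κ : ℕ} (hκ1 : 1 ≤ κ) (hκk : κ ≤ k) :
    bellPartial k κ = ∑ P ∈ Finset.univ.filter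
        (fun P : Nat.Partition k => Multiset.card P.parts = κ),
      MvPolynomial.C (Multiset.bell P.parts : ℤ) *
        (P.parts.map (fun p => MvPolynomial.X (p-1) : ℕ → MvPolynomial ℕ ℤ)).prod := by
  classical
  rw [bellPartial, ← Finset.sum_filter]
  refine Finset.sum_bij'
    (i := fun j hj => toPartition j ((Finset.mem_filter.1 hj).2.1))
    (j := fun P _ => toTuple (k - κ + 1) P) ?_ ?_ ?_ ?_ ?_
  · -- hi : membership
    intro j hj
    rw [Finset.mem_filter]
    refine ⟨Finset.mem_univ _, ?_⟩
    show Multiset.card (partsOf fun ν => (j ν : ℕ)) = κ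
    rw [card_partsOf]
    exact (Finset.mem_filter.1 hj).2.2
  · -- hj : membership
    intro P hP
    have hcard : Multiset.card P.parts = κ := (Finset.mem_filter.1 hP).2
    have hb : ∀ w ∈ P.parts, 1 ≤ w ∧ w ≤ k - κ + 1 := fun w hw => part_le P hcard hw
    rw [Finset.mem_filter]
    refine ⟨Finset.mem_univ _, ?_, ?_⟩
    · show ∑ ν : Fin (k - κ + 1), ((ν:ℕ)+1) * P.parts.count ((ν:ℕ)+1) = k
      rw [sum_fin_count P.parts hb (fun w c => w * c) (fun w => mul_zero w),
        sum_mul_count, P.parts_sum]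
    · show ∑ ν : Fin (k - κ + 1), P.parts.count ((ν:ℕ)+1) = κ
      rw [sum_fin_count P.parts hb (fun _ c => c) (fun _ => rfl),
        Multiset.toFinset_sum_count_eq, hcard]
  · -- left inverse
    intro j hj
    funext ν
    exact Fin.ext (count_partsOf (fun ν => (j ν : ℕ)) ν)
  · -- right inverse
    intro P hP
    have hcard : Multiset.card P.parts = κ := (Finset.mem_filter.1 hP).2
    have hb : ∀ w ∈ P.parts, 1 ≤ w ∧ w ≤ k - κ + 1 := fun w hw => part_le P hcard hw
    refine Nat.Partition.ext ?_
    show partsOf (fun ν => P.parts.count ((ν:ℕ)+1)) = P.parts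
    ext a
    by_cases ha : 1 ≤ a ∧ a ≤ k - κ + 1
    · have hlt : a - 1 < k - κ + 1 := by omega
      have : a = ((⟨a - 1, hlt⟩ : Fin (k - κ + 1)) : ℕ) + 1 := by simp; omega
      rw [this, count_partsOf]
    · rw [Multiset.count_eq_zero_of_notMem (fun h => ha (mem_partsOf h)),
        Multiset.count_eq_zero_of_notMem (fun h => ha (hb a h))]
  · -- term equality
    intro j hj
    obtain ⟨-, hc1, hc2⟩ := Finset.mem_filter.1 hj
    set s : Multiset ℕ := partsOf (fun ν => (j ν : ℕ)) with hs
    have hb : ∀ w ∈ s, 1 ≤ w ∧ w ≤ k - κ + 1 := fun w hw => mem_partsOf hw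
    have h0 : (0:ℕ) ∉ s := fun h => by have := (hb 0 h).1; omega
    have hcnt : ∀ ν : Fin (k - κ + 1), s.count ((ν:ℕ)+1) = (j ν : ℕ) :=
      count_partsOf (fun ν => (j ν : ℕ))
    have hcoef : (k.factorial /
          ∏ ν : Fin (k - κ + 1), ((j ν : ℕ).factorial * ((ν : ℕ) + 1).factorial ^ (j ν : ℕ)) : ℕ)
        = Multiset.bell s := by
      rw [Multiset.bell_eq]
      have hsum : s.sum = k := by rw [hs, sum_partsOf]; exact hc1
      rw [hsum]
      congr 1
      rw [Finset.prod_multiset_map_count s (fun jj => jj.factorial),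
        count_prod_eq h0 (Finset.Subset.refl _)]
      rw [← Finset.prod_mul_distrib,
        ← prod_fin_count s hb
        (fun w c => (w.factorial) ^ c * c.factorial)
        (fun w => by simp)]
      exact Finset.prod_congr rfl fun ν _ => by rw [hcnt ν]; exact mul_comm _ _
    have hmono : (∏ ν : Fin (k - κ + 1), MvPolynomial.X ((ν : ℕ)) ^ (j ν : ℕ)
          : MvPolynomial ℕ ℤ)
        = (s.map (fun p => MvPolynomial.X (p-1) : ℕ → MvPolynomial ℕ ℤ)).prod := by
      rw [Finset.prod_multiset_map_count s (fun p => (MvPolynomial.X (p-1) : MvPolynomial ℕ ℤ)),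
        ← prod_fin_count s hb (fun w c => (MvPolynomial.X (w-1) : MvPolynomial ℕ ℤ) ^ c)
          (fun w => pow_zero _)]
      refine Finset.prod_congr rfl fun ν _ => by rw [hcnt ν]; simp
    rw [hcoef, hmono]
    rfl



lemma newton {σ : Type*} [Fintype σ] {R : Type*} [CommRing R] {m : ℕ} (hm : 1 ≤ m) :
    (m : MvPolynomial σ R) * esymm σ R m
      = ∑ w ∈ Finset.Icc 1 m, (-1)^(w-1) * psum σ R w * esymm σ R (m - w) := by
  classical
  rw [MvPolynomial.mul_esymm_eq_sum, Finset.mul_sum]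
  refine Finset.sum_bij' (i := fun a _ => a.2) (j := fun w _ => (m - w, w)) ?_ ?_ ?_ ?_ ?_
  · intro a ha
    obtain ⟨ha1, ha2⟩ := Finset.mem_filter.1 ha
    rw [Finset.HasAntidiagonal.mem_antidiagonal] at ha1
    rw [Finset.mem_Icc]; omega
  · intro w hw
    obtain ⟨hw1, hwm⟩ := Finset.mem_Icc.1 hw
    refine Finset.mem_filter.2 ⟨Finset.HasAntidiagonal.mem_antidiagonal.2 (by omega), by show m - w < m; omega⟩
  · intro a ha
    obtain ⟨ha1, ha2⟩ := Finset.mem_filter.1 ha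
    rw [Finset.HasAntidiagonal.mem_antidiagonal] at ha1
    have h : m - a.2 = a.1 := by omega
    rw [h]
  · intro w hw; rfl
  · intro a ha
    obtain ⟨ha1, ha2⟩ := Finset.mem_filter.1 ha
    rw [Finset.HasAntidiagonal.mem_antidiagonal] at ha1
    have h2 : a.1 = m - a.2 := by omega
    have h21 : 1 ≤ a.2 := by omega
    have hsign : ((-1 : MvPolynomial σ R) ^ (m+1)) * (-1)^(m - a.2) = (-1)^(a.2-1) := by
      rw [← pow_add, show (m+1)+(m - a.2) = (a.2-1) + 2*(m+1-a.2) by omega,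
        pow_add, pow_mul, neg_one_sq, one_pow, mul_one]
    rw [h2]
    calc ((-1 : MvPolynomial σ R)^(m+1)) * ((-1)^(m-a.2) * esymm σ R (m-a.2) * psum σ R a.2)
        = ((-1 : MvPolynomial σ R)^(m+1) * (-1)^(m-a.2)) * esymm σ R (m-a.2) * psum σ R a.2 := by
          ring
      _ = (-1)^(a.2-1) * psum σ R a.2 * esymm σ R (m - a.2) := by rw [hsign]; ring

noncomputable def fP (n : ℕ) : ℕ → MvPolynomial (Fin n) ℚ :=
  fun w => -((w-1).factorial : MvPolynomial (Fin n) ℚ) * psum (Fin n) ℚ w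

lemma main (n : ℕ) : ∀ m : ℕ,
    (m.factorial : MvPolynomial (Fin n) ℚ) * esymm (Fin n) ℚ m
      = (-1)^m * bar (fP n) m := by
  intro m
  induction m using Nat.strong_induction_on with
  | _ m ih =>
    rcases Nat.eq_zero_or_pos m with rfl | hm
    · simp [bar_zero, MvPolynomial.esymm_zero]
    · have hm1 : 1 ≤ m := hm
      have hcancel : (m : MvPolynomial (Fin n) ℚ) ≠ 0 := Nat.cast_ne_zero.2 (by omega)
      apply mul_left_cancel₀ hcancel
      rw [bar_rec (fP n) hm1,
        show (m : MvPolynomial (Fin n) ℚ) * ((m.factorial : MvPolynomial (Fin n) ℚ)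
            * esymm (Fin n) ℚ m)
          = (m.factorial : MvPolynomial (Fin n) ℚ)
            * ((m : MvPolynomial (Fin n) ℚ) * esymm (Fin n) ℚ m) by ring,
        newton hm1, Finset.mul_sum, Finset.mul_sum, Finset.mul_sum]
      refine Finset.sum_congr rfl fun w hw => ?_
      obtain ⟨hw1, hwm⟩ := Finset.mem_Icc.1 hw
      have ihw := ih (m - w) (by omega)
      have hfac : m.factorial = (m * ((m-1).choose (w-1) * (w-1).factorial)) * (m-w).factorial := by
        have h1 : (m-1).choose (w-1) * (w-1).factorial * ((m-1)-(w-1)).factorial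
            = (m-1).factorial := Nat.choose_mul_factorial_mul_factorial (by omega)
        have h2 : (m-1)-(w-1) = m - w := by omega
        have h3 : m * (m-1).factorial = m.factorial := by
          obtain ⟨m', rfl⟩ : ∃ m', m = m' + 1 := ⟨m - 1, by omega⟩
          simp [Nat.factorial_succ]
        rw [h2] at h1
        calc m.factorial = m * (m-1).factorial := h3.symm
          _ = m * ((m-1).choose (w-1) * (w-1).factorial * (m-w).factorial) := by rw [h1]
          _ = (m * ((m-1).choose (w-1) * (w-1).factorial)) * (m-w).factorial := by ring
      have hsgn : ((-1 : MvPolynomial (Fin n) ℚ))^(w-1) * (-1)^(m-w) = -(-1)^m := by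
        rw [← pow_add, show (w-1)+(m-w) = m - 1 by omega,
          show m = (m-1) + 1 by omega, pow_succ,
          show m - 1 + 1 - 1 = m - 1 by omega]
        ring
      calc (m.factorial : MvPolynomial (Fin n) ℚ)
            * ((-1)^(w-1) * psum (Fin n) ℚ w * esymm (Fin n) ℚ (m - w))
          = ((m * ((m-1).choose (w-1) * (w-1).factorial) : ℕ) : MvPolynomial (Fin n) ℚ)
              * ((-1)^(w-1) * psum (Fin n) ℚ w
                * (((m-w).factorial : MvPolynomial (Fin n) ℚ) * esymm (Fin n) ℚ (m - w))) := by
            rw [show (m.factorial : MvPolynomial (Fin n) ℚ)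
                = (((m * ((m-1).choose (w-1) * (w-1).factorial)) * (m-w).factorial : ℕ)
                  : MvPolynomial (Fin n) ℚ) from Nat.cast_inj.2 hfac]
            push_cast
            ring
        _ = ((m * ((m-1).choose (w-1) * (w-1).factorial) : ℕ) : MvPolynomial (Fin n) ℚ)
              * ((((-1:MvPolynomial (Fin n) ℚ)^(w-1) * (-1)^(m-w))) * psum (Fin n) ℚ w
                * bar (fP n) (m - w)) := by rw [ihw]; ring
        _ = (m : MvPolynomial (Fin n) ℚ)
              * ((-1)^m * (((m-1).choose (w-1) : MvPolynomial (Fin n) ℚ) * fP n w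
                * bar (fP n) (m - w))) := by
            rw [hsgn, fP]
            push_cast
            ring


lemma bar_def {A : Type*} [CommRing A] (f : ℕ → A) (m : ℕ) :
    bar f m = ∑ P : m.Partition, (Multiset.bell P.parts : A) * (P.parts.map f).prod := rfl

lemma fP_def (n : ℕ) :
    fP n = fun w => -((w-1).factorial : MvPolynomial (Fin n) ℚ)
      * MvPolynomial.psum (Fin n) ℚ w := rfl


variable {A : Type*} [CommRing A]
lemma bellComplete_eq {k : ℕ} (hk : 1 ≤ k) :
    bellComplete k = ∑ P : Nat.Partition k,
      MvPolynomial.C (Multiset.bell P.parts : ℤ) *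
        (P.parts.map (fun p => MvPolynomial.X (p-1) : ℕ → MvPolynomial ℕ ℤ)).prod := by
  classical
  have hmaps : ∀ P : Nat.Partition k, P ∈ Finset.univ →
      Multiset.card P.parts ∈ Finset.Icc 1 k := by
    intro P _
    rw [Finset.mem_Icc]
    have h1 : Multiset.card P.parts ≤ k :=
      (card_le_sum_of_pos fun i hi => P.parts_pos hi).trans P.parts_sum.le
    have h2 : P.parts ≠ 0 := by
      intro h0
      have := P.parts_sum
      rw [h0] at this
      simp at this
      omega
    have := Multiset.card_pos.2 h2
    omega
  rw [← Finset.sum_fiberwise_of_maps_to hmaps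
    (fun P => MvPolynomial.C (Multiset.bell P.parts : ℤ) *
      (P.parts.map (fun p => MvPolynomial.X (p-1) : ℕ → MvPolynomial ℕ ℤ)).prod)]
  rw [bellComplete]
  refine Finset.sum_congr rfl fun κ hκ => ?_
  obtain ⟨h1, h2⟩ := Finset.mem_Icc.1 hκ
  exact bellPartial_eq h1 h2


end Stmt19Aux

theorem stmt19 (n k : ℕ) (hk : 1 ≤ k) (hkn : k ≤ n) :
    (k.factorial : MvPolynomial (Fin n) ℚ) * MvPolynomial.esymm (Fin n) ℚ k =
      MvPolynomial.aeval
        (fun i : ℕ => ∑ a : Fin n, MvPolynomial.X a ^ (i + 1)) (sigmaStar k) := by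
  classical
  set ψ : ℕ → MvPolynomial (Fin n) ℚ := fun i : ℕ => ∑ a : Fin n, MvPolynomial.X a ^ (i + 1)
    with hψ
  have hcomp : (MvPolynomial.aeval ψ : MvPolynomial ℕ ℤ →ₐ[ℤ] MvPolynomial (Fin n) ℚ)
      (MvPolynomial.aeval
        (fun i : ℕ => MvPolynomial.C (-(i.factorial : ℤ)) * MvPolynomial.X i)
        (bellComplete k))
      = MvPolynomial.aeval (fun i : ℕ =>
          (MvPolynomial.aeval ψ) (MvPolynomial.C (-(i.factorial : ℤ)) * MvPolynomial.X i))
        (bellComplete k) := by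
    rw [← MvPolynomial.comp_aeval]
    rfl
  have hχ : ∀ i : ℕ,
      (MvPolynomial.aeval ψ) (MvPolynomial.C (-(i.factorial : ℤ)) * MvPolynomial.X i)
      = -((i.factorial : MvPolynomial (Fin n) ℚ)) * MvPolynomial.psum (Fin n) ℚ (i+1) := by
    intro i
    rw [map_mul, MvPolynomial.aeval_C, MvPolynomial.aeval_X]
    congr 1
    simp
  have hRHS : MvPolynomial.aeval ψ (sigmaStar k)
      = (-1)^k * Stmt19Aux.bar (Stmt19Aux.fP n) k := by
    rw [sigmaStar, map_mul, map_pow, map_neg, map_one, hcomp]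
    congr 1
    rw [funext hχ, Stmt19Aux.bellComplete_eq hk, map_sum, Stmt19Aux.bar_def]
    refine Finset.sum_congr rfl fun P _ => ?_
    rw [map_mul, MvPolynomial.aeval_C]
    congr 1
    rw [map_multiset_prod, Multiset.map_map]
    refine congrArg Multiset.prod (Multiset.map_congr rfl fun p hp => ?_)
    have hp1 : 1 ≤ p := P.parts_pos hp
    simp only [Function.comp_apply, MvPolynomial.aeval_X]
    rw [Stmt19Aux.fP_def]
    have hpp : p - 1 + 1 = p := by omega
    rw [hpp]
  rw [hRHS]
  exact Stmt19Aux.main n k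
end
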